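/- arXiv:1201.0143 — 12 statements merged into one kernel-verified Lean document; each statement's English description precedes it below -/
import Mathlib

section
/- Let a ∈ ℤ, b ∈ ℤ ∪ {+∞} with a < b, and let p be a density with support S_p = {a, a+1, …, b}. Let Z be a random variable with law p. Then for every function f : ℤ → ℝ such that f(a) = 0, x ↦ f(x)p(x) is bounded on S_p, the series Σ_{x ∈ S_p} |f(x+1)p(x+1) − f(x)p(x)| converges, and (in case b = +∞) f(x)p(x) → 0 as x → +∞, one has E[T1(f,p)(Z)] = Σ_{x ∈ S_p} (f(x+1)p(x+1) − f(x)p(x)) = 0. -/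
open MeasureTheory Filter

/-- The Stein operator `T1` associated with a density `p` with support `S`:
`T1(f,p)(x) = (f(x+1)p(x+1) - f(x)p(x))/p(x)` for `x ∈ S`, and `0` otherwise. -/
noncomputable def T1 (S : Set ℤ) (f p : ℤ → ℝ) : ℤ → ℝ :=
  S.indicator (fun x => (f (x + 1) * p (x + 1) - f x * p x) / p x)

/-! Write `G = f p`. Since `p` vanishes off `S = [a, b]`, the sum of `Δ⁺G` over `S` is the sum of
`Δ⁺G` over all of `[a, ∞)`, which telescopes to `lim G - G a = 0`. The expectation of `T1(f,p)(Z)`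
is the same sum, because `p · T1(f,p) = Δ⁺G` on `S`. -/

lemma mul_T1_eq_indicator {S : Set ℤ} {f p : ℤ → ℝ} (hp : ∀ x ∈ S, p x ≠ 0) (x : ℤ) :
    p x * T1 S f p x = S.indicator (fun x => f (x + 1) * p (x + 1) - f x * p x) x := by
  by_cases hx : x ∈ S
  · simp [T1, hx, mul_div_cancel₀ _ (hp x hx)]
  · simp [T1, hx]

theorem integral_comp_eq_tsum_of_law {α Ω E : Type*} [MeasurableSpace α]
    [MeasurableSingletonClass α] [Countable α] [MeasurableSpace Ω] [NormedAddCommGroup E]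
    [NormedSpace ℝ E] [CompleteSpace E] {μ : Measure Ω} {Z : Ω → α} (hZ : Measurable Z)
    {p : α → ℝ} (hp : ∀ x, 0 ≤ p x) (hlaw : ∀ x, μ (Z ⁻¹' {x}) = ENNReal.ofReal (p x))
    {g : α → E} (hg : Summable fun x => p x * ‖g x‖) :
    ∫ ω, g (Z ω) ∂μ = ∑' x, p x • g x := by
  have hmap : μ.map Z = Measure.sum fun x => ENNReal.ofReal (p x) • Measure.dirac x := by
    conv_lhs => rw [← Measure.sum_smul_dirac (μ.map Z)]
    simp_rw [Measure.map_apply hZ (measurableSet_singleton _), hlaw]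
  rw [← integral_map hZ.aemeasurable .of_discrete, hmap,
    integral_sum_dirac_eq_tsum (fun _ => ENNReal.ofReal_ne_top)]
  · simp_rw [ENNReal.toReal_ofReal (hp _)]
  · simpa only [ENNReal.toReal_ofReal (hp _)] using hg

theorem tsum_nat_sub_eq_of_tendsto {E : Type*} [AddCommGroup E] [TopologicalSpace E]
    [IsTopologicalAddGroup E] [T2Space E] {G : ℕ → E} {l : E}
    (hs : Summable fun n => G (n + 1) - G n) (hG : Tendsto G atTop (nhds l)) :
    ∑' n, (G (n + 1) - G n) = l - G 0 :=
  tendsto_nhds_unique hs.hasSum.tendsto_sum_nat <| by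
    simpa only [Finset.sum_range_sub] using hG.sub_const (G 0)

theorem tsum_indicator_Ici_sub_eq_neg {E : Type*} [AddCommGroup E] [TopologicalSpace E]
    [IsTopologicalAddGroup E] [T2Space E] {G : ℤ → E} {a : ℤ}
    (hs : Summable ((Set.Ici a).indicator fun x => G (x + 1) - G x))
    (hG : Tendsto G atTop (nhds 0)) :
    ∑' x, (Set.Ici a).indicator (fun x => G (x + 1) - G x) x = -G a := by
  have hinj : Function.Injective fun n : ℕ => a + n := fun m n h => by simpa using h
  have hrange : Set.range (fun n : ℕ => a + n) = Set.Ici a := by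
    ext x
    refine ⟨?_, fun hx => ⟨(x - a).toNat, by simp [Int.toNat_of_nonneg (sub_nonneg.2 hx)]⟩⟩
    rintro ⟨n, rfl⟩
    simp
  have hout : ∀ x ∉ Set.range (fun n : ℕ => a + n),
      (Set.Ici a).indicator (fun x => G (x + 1) - G x) x = 0 := fun x hx =>
    Set.indicator_of_notMem (hrange ▸ hx) _
  rw [← hinj.tsum_eq (Function.support_subset_iff'.2 hout)]
  have hG' : Tendsto (fun n : ℕ => G (a + n)) atTop (nhds 0) :=
    hG.comp (tendsto_atTop_add_const_left atTop a tendsto_natCast_atTop_atTop)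
  have hs' := (hinj.summable_iff hout).2 hs
  have hmem : ∀ n : ℕ, a + n ∈ Set.Ici a := fun n => hrange ▸ Set.mem_range_self n
  simp only [Function.comp_def, Set.indicator_of_mem (hmem _)] at hs' ⊢
  simpa [add_assoc] using tsum_nat_sub_eq_of_tendsto (G := fun n : ℕ => G (a + n)) (by
    simpa [add_assoc] using hs') hG'

theorem indicator_Icc_sub_eq_indicator_Ici {E : Type*} [AddGroup E] {a : ℤ} {b : WithTop ℤ}
    {G : ℤ → E} (hG : ∀ x : ℤ, b < x → G x = 0) :
    {x : ℤ | a ≤ x ∧ (x : WithTop ℤ) ≤ b}.indicator (fun x => G (x + 1) - G x) =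
      (Set.Ici a).indicator (fun x => G (x + 1) - G x) := by
  ext x
  by_cases hxb : (x : WithTop ℤ) ≤ b
  · simp only [Set.indicator_apply, Set.mem_ofPred_eq, Set.mem_Ici, hxb, and_true]
  · have hx1 : b < ((x + 1 : ℤ) : WithTop ℤ) :=
      (not_le.1 hxb).trans (WithTop.coe_lt_coe.2 (lt_add_one x))
    simp [Set.indicator_apply, hxb, hG x (not_le.1 hxb), hG _ hx1]

theorem stmt_0_general
    (a : ℤ) (b : WithTop ℤ)
    (S : Set ℤ) (hS : S = {x : ℤ | a ≤ x ∧ (x : WithTop ℤ) ≤ b})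
    (p : ℤ → ℝ)
    (hpos : ∀ x ∈ S, 0 < p x) (hnull : ∀ x ∉ S, p x = 0)
    {Ω : Type*} [MeasurableSpace Ω] (μ : Measure Ω)
    (Z : Ω → ℤ) (hZ : Measurable Z)
    (hlaw : ∀ x : ℤ, μ (Z ⁻¹' {x}) = ENNReal.ofReal (p x))
    (f : ℤ → ℝ)
    (hfa : f a = 0)
    (hsummable : Summable
      (fun x : S => |f ((x : ℤ) + 1) * p ((x : ℤ) + 1) - f (x : ℤ) * p (x : ℤ)|))
    (hlim : b = ⊤ → Tendsto (fun x : ℤ => f x * p x) atTop (nhds 0)) :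
    (∫ ω, T1 S f p (Z ω) ∂μ)
        = (∑' x : S, (f ((x : ℤ) + 1) * p ((x : ℤ) + 1) - f (x : ℤ) * p (x : ℤ))) ∧
      (∑' x : S, (f ((x : ℤ) + 1) * p ((x : ℤ) + 1) - f (x : ℤ) * p (x : ℤ))) = 0 := by
  have hp : ∀ x, 0 ≤ p x := fun x => by
    by_cases hx : x ∈ S
    exacts [(hpos x hx).le, (hnull x hx).ge]
  have hG_out : ∀ x : ℤ, b < x → f x * p x = 0 := fun x hx => by
    rw [hnull x (by simp [hS, hx.not_ge]), mul_zero]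
  have hG_lim : Tendsto (fun x => f x * p x) atTop (nhds 0) := by
    rcases b with _ | m
    · exact hlim rfl
    · exact tendsto_const_nhds.congr' <| (eventually_gt_atTop m).mono fun x hx =>
        (hG_out x (WithTop.coe_lt_coe.2 hx)).symm
  have hS_Ici : S.indicator (fun x => f (x + 1) * p (x + 1) - f x * p x) =
      (Set.Ici a).indicator (fun x => f (x + 1) * p (x + 1) - f x * p x) := by
    rw [hS]
    exact indicator_Icc_sub_eq_indicator_Ici (G := fun x => f x * p x) hG_out
  have hD_sum : Summable (S.indicator fun x => f (x + 1) * p (x + 1) - f x * p x) :=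
    summable_subtype_iff_indicator.1 hsummable.of_abs
  have hp_T1 := mul_T1_eq_indicator (f := f) (fun x hx => (hpos x hx).ne')
  rw [tsum_subtype S fun x => f (x + 1) * p (x + 1) - f x * p x]
  constructor
  · rw [integral_comp_eq_tsum_of_law hZ hp hlaw]
    · simp_rw [smul_eq_mul, hp_T1]
    · refine hD_sum.abs.congr fun x => ?_
      rw [← hp_T1, abs_mul, abs_of_nonneg (hp x), Real.norm_eq_abs]
  · rw [hS_Ici, tsum_indicator_Ici_sub_eq_neg (hS_Ici ▸ hD_sum) hG_lim, hfa,
      zero_mul, neg_zero]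

theorem stmt_0
    (a : ℤ) (b : WithTop ℤ) (hab : (a : WithTop ℤ) < b)
    (S : Set ℤ) (hS : S = {x : ℤ | a ≤ x ∧ (x : WithTop ℤ) ≤ b})
    (p : ℤ → ℝ)
    (hpos : ∀ x ∈ S, 0 < p x) (hnull : ∀ x ∉ S, p x = 0)
    (hmass : ∑' x : S, p x = 1)
    {Ω : Type*} [MeasurableSpace Ω] (μ : Measure Ω) [IsProbabilityMeasure μ]
    (Z : Ω → ℤ) (hZ : Measurable Z)
    (hlaw : ∀ x : ℤ, μ (Z ⁻¹' {x}) = ENNReal.ofReal (p x))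
    (f : ℤ → ℝ)
    (hfa : f a = 0)
    (hbdd : ∃ M : ℝ, ∀ x ∈ S, |f x * p x| ≤ M)
    (hsummable : Summable
      (fun x : S => |f ((x : ℤ) + 1) * p ((x : ℤ) + 1) - f (x : ℤ) * p (x : ℤ)|))
    (hlim : b = ⊤ → Tendsto (fun x : ℤ => f x * p x) atTop (nhds 0)) :
    (∫ ω, T1 S f p (Z ω) ∂μ)
        = (∑' x : S, (f ((x : ℤ) + 1) * p ((x : ℤ) + 1) - f (x : ℤ) * p (x : ℤ))) ∧
      (∑' x : S, (f ((x : ℤ) + 1) * p ((x : ℤ) + 1) - f (x : ℤ) * p (x : ℤ))) = 0 :=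
  stmt_0_general a b S hS p hpos hnull μ Z hZ hlaw f hfa hsummable hlim
end

section
/- Let a ∈ ℤ, b ∈ ℤ ∪ {+∞} with a < b, and let p be a density with support S_p = {a, a+1, …, b}. Let X be a ℤ-valued random variable with P(X ∈ S_p) > 0. Suppose that E[T1(f,p)(X)] = 0 for every function f : ℤ → ℝ such that f(a) = 0, x ↦ f(x)p(x) is bounded on S_p, (in case b = +∞) f(x)p(x) → 0 as x → +∞, and T1(f,p)(X) is integrable. Then the conditional law of X given X ∈ S_p equals p: for all z ∈ ℤ, P(X ≤ z | X ∈ S_p) = Σ_{k ≤ z} p(k). -/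
open MeasureTheory Filter ProbabilityTheory

open Topology

/-! For a bounded `h` with `∑ₓ p x h x = 0`, the partial sums `G x = ∑_{a ≤ k < x} p k h k`
vanish outside the interval `S` (past its right end they have reached the full sum `0`) and tend
to `0` at `+∞`. Hence `f = G / p` is an admissible test function, with `T1(f,p) = h` on `S`, and
the Stein identity gives `E[h(X); X ∈ S] = 0`. Taking `h = 1_{(-∞,z]} - ∑_{k ≤ z} p k` identifies
the conditional law. -/

section PartialSums

variable {S : Set ℤ} {a : ℤ} {q : ℤ → ℝ}

theorem sum_Ico_eq_zero_of_notMem (hS : S.OrdConnected) (ha : a ∈ lowerBounds S)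
    (hq : ∀ x ∉ S, q x = 0) (hsum : HasSum q 0) {y : ℤ} (hy : y ∉ S) :
    ∑ k ∈ Finset.Ico a y, q k = 0 := by
  -- `y ∉ S` lies either below or above the interval `S`.
  by_cases habove : ∃ s ∈ S, y < s
  · obtain ⟨s, hs, hys⟩ := habove
    refine Finset.sum_eq_zero fun k hk => hq k fun hkS => hy ?_
    exact hS.out hkS hs ⟨(Finset.mem_Ico.1 hk).2.le, hys.le⟩
  · push Not at habove
    refine (hasSum_sum_of_ne_finset_zero fun k hk => hq k fun hkS => hk ?_).unique hsum
    exact Finset.mem_Ico.2 ⟨ha hkS, (habove k hkS).lt_of_ne fun h => hy (h ▸ hkS)⟩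

theorem tendsto_sum_Ico_atTop {L : ℝ} (hq : ∀ k < a, q k = 0) (hsum : HasSum q L) :
    Tendsto (fun x => ∑ k ∈ Finset.Ico a x, q k) atTop (𝓝 L) := by
  refine (hsum.comp Finset.tendsto_Ico_neg_atTop_atTop).congr' ?_
  filter_upwards [eventually_ge_atTop (-a)] with x hx
  refine (Finset.sum_subset (Finset.Ico_subset_Ico (by omega) le_rfl) fun k hk hka => hq k ?_).symm
  simp only [Finset.mem_Ico] at hk hka
  omega

end PartialSums

theorem div_mul_cancel_of_vanishes_off {S : Set ℤ} {G p : ℤ → ℝ} (hp : ∀ x ∈ S, p x ≠ 0)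
    (hG : ∀ x ∉ S, G x = 0) (x : ℤ) : G x / p x * p x = G x := by
  by_cases hx : x ∈ S
  · exact div_mul_cancel₀ _ (hp x hx)
  · simp [hG x hx]

theorem T1_div_eq_indicator {S : Set ℤ} {G p : ℤ → ℝ} (hp : ∀ x ∈ S, p x ≠ 0)
    (hG : ∀ x ∉ S, G x = 0) :
    T1 S (fun x => G x / p x) p = S.indicator fun x => (G (x + 1) - G x) / p x := by
  simp only [T1, div_mul_cancel_of_vanishes_off hp hG]

theorem integral_indicator_comp_eq_zero_of_stein {S : Set ℤ} {a : ℤ} (hS : S.OrdConnected)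
    (ha : a ∈ lowerBounds S) {p : ℤ → ℝ} (hpos : ∀ x ∈ S, 0 < p x) (hnull : ∀ x ∉ S, p x = 0)
    {Ω : Type*} [MeasurableSpace Ω] {μ : Measure Ω} [IsFiniteMeasure μ]
    {X : Ω → ℤ} (hX : Measurable X)
    (hstein : ∀ f : ℤ → ℝ, f a = 0 → (∃ M : ℝ, ∀ x ∈ S, |f x * p x| ≤ M) →
      Tendsto (fun x : ℤ => f x * p x) atTop (𝓝 0) →
      Integrable (fun ω => T1 S f p (X ω)) μ → ∫ ω, T1 S f p (X ω) ∂μ = 0)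
    {h : ℤ → ℝ} {C : ℝ} (hC : ∀ x, |h x| ≤ C) (hmean : HasSum (fun x => p x * h x) 0) :
    ∫ ω, S.indicator h (X ω) ∂μ = 0 := by
  set q : ℤ → ℝ := fun x => p x * h x
  set G : ℤ → ℝ := fun x => ∑ k ∈ Finset.Ico a x, q k
  have hq : ∀ x ∉ S, q x = 0 := fun x hx => by simp [q, hnull x hx]
  have hG : ∀ x ∉ S, G x = 0 := fun x hx => sum_Ico_eq_zero_of_notMem hS ha hq hmean hx
  have hp : ∀ x ∈ S, p x ≠ 0 := fun x hx => (hpos x hx).ne'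
  have hT1 : T1 S (fun x => G x / p x) p = S.indicator h := by
    rw [T1_div_eq_indicator hp hG]
    refine Set.indicator_congr fun x hx => ?_
    rw [show G (x + 1) - G x = q x by
      simp [G, ← Finset.insert_Ico_right_eq_Ico_add_one (ha hx)]]
    exact mul_div_cancel_left₀ _ (hp x hx)
  have hbound : ∃ M, ∀ x ∈ S, |G x / p x * p x| ≤ M := by
    refine ⟨∑' k, |q k|, fun x _ => ?_⟩
    rw [div_mul_cancel_of_vanishes_off hp hG]
    exact (Finset.abs_sum_le_sum_abs _ _).trans
      (hmean.summable.abs.sum_le_tsum _ fun _ _ => abs_nonneg _)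
  have htendsto : Tendsto (fun x => G x / p x * p x) atTop (𝓝 0) := by
    simp only [div_mul_cancel_of_vanishes_off hp hG]
    exact tendsto_sum_Ico_atTop (fun k hk => hq k fun hkS => (ha hkS).not_gt hk) hmean
  have hint : Integrable (fun ω => S.indicator h (X ω)) μ := by
    refine .of_bound ((measurable_of_countable (S.indicator h)).comp hX).aestronglyMeasurable
      C (ae_of_all _ fun ω => ?_)
    exact (norm_indicator_le_norm_self h (X ω)).trans (hC (X ω))
  rw [← hT1] at hint ⊢
  exact hstein _ (by simp [G]) hbound htendsto hint

theorem integral_indicator_comp_indicator_sub_const {Ω : Type*} [MeasurableSpace Ω]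
    {μ : Measure Ω} [IsFiniteMeasure μ] {X : Ω → ℤ} (hX : Measurable X) (S T : Set ℤ) (c : ℝ) :
    ∫ ω, S.indicator (fun x => T.indicator 1 x - c) (X ω) ∂μ
      = μ.real (X ⁻¹' S ∩ X ⁻¹' T) - c * μ.real (X ⁻¹' S) := by
  have hsplit : (fun ω => S.indicator (fun x => T.indicator 1 x - c) (X ω)) = fun ω =>
      (X ⁻¹' S ∩ X ⁻¹' T).indicator 1 ω - c * (X ⁻¹' S).indicator 1 ω := by
    funext ω
    by_cases hxS : X ω ∈ S <;> by_cases hxT : X ω ∈ T <;> simp [hxS, hxT]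
  have hS : MeasurableSet (X ⁻¹' S) := hX (.of_discrete)
  have hST : MeasurableSet (X ⁻¹' S ∩ X ⁻¹' T) := hS.inter (hX (.of_discrete))
  have hI {s : Set Ω} (hs : MeasurableSet s) : Integrable (s.indicator (1 : Ω → ℝ)) μ :=
    (integrable_const 1).indicator hs
  rw [hsplit, integral_sub (hI hST) ((hI hS).const_mul c), integral_const_mul,
    integral_indicator_one hST, integral_indicator_one hS]

theorem hasSum_of_tsum_subtype_of_ne_zero {β : Type*} {f : β → ℝ} {s : Set β}
    (hf : ∀ x ∉ s, f x = 0) {L : ℝ} (hL : L ≠ 0) (h : ∑' x : s, f x = L) : HasSum f L := by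
  have hsumm : Summable fun x : s => f x := by
    by_contra hns
    exact hL (h ▸ tsum_eq_zero_of_not_summable hns)
  exact (hasSum_subtype_iff_of_support_subset fun x hx => by_contra fun hxs => hx (hf x hxs)).1
    (h ▸ hsumm.hasSum)

theorem cond_apply_eq_ofReal_of_measureReal_inter {Ω : Type*} [MeasurableSpace Ω]
    {μ : Measure Ω} [IsFiniteMeasure μ] {A B : Set Ω} (hA : MeasurableSet A) (hA0 : μ A ≠ 0)
    {c : ℝ} (hc : 0 ≤ c) (h : μ.real (A ∩ B) = c * μ.real A) :
    μ[B|A] = ENNReal.ofReal c := by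
  rw [cond_apply hA, ← ofReal_measureReal (s := A ∩ B), h, ENNReal.ofReal_mul hc,
    ofReal_measureReal, mul_left_comm, ENNReal.inv_mul_cancel hA0 (measure_ne_top μ A), mul_one]

theorem stmt_1_general
    (a : ℤ) (b : WithTop ℤ)
    (S : Set ℤ) (hS : S = {x : ℤ | a ≤ x ∧ (x : WithTop ℤ) ≤ b})
    (p : ℤ → ℝ)
    (hpos : ∀ x ∈ S, 0 < p x) (hnull : ∀ x ∉ S, p x = 0)
    (hmass : ∑' x : S, p x = 1)
    {Ω : Type*} [MeasurableSpace Ω] (μ : Measure Ω) [IsProbabilityMeasure μ]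
    (X : Ω → ℤ) (hX : Measurable X)
    (hposS : 0 < μ {ω | X ω ∈ S})
    (hstein : ∀ f : ℤ → ℝ,
      f a = 0 →
      (∃ M : ℝ, ∀ x ∈ S, |f x * p x| ≤ M) →
      (b = ⊤ → Tendsto (fun x : ℤ => f x * p x) atTop (nhds 0)) →
      Integrable (fun ω => T1 S f p (X ω)) μ →
      (∫ ω, T1 S f p (X ω) ∂μ) = 0) :
    ∀ z : ℤ, (μ[|{ω | X ω ∈ S}]) {ω | X ω ≤ z}
      = ENNReal.ofReal (∑' k : {k : ℤ // k ≤ z}, p (k : ℤ)) := by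
  intro z
  have hconn : S.OrdConnected := hS ▸
    ⟨fun x hx y hy t ht => ⟨hx.1.trans ht.1, (WithTop.coe_le_coe.2 ht.2).trans hy.2⟩⟩
  have ha : a ∈ lowerBounds S := hS ▸ fun x hx => hx.1
  have hp : HasSum p 1 := hasSum_of_tsum_subtype_of_ne_zero hnull one_ne_zero hmass
  set c := ∑' k : {k : ℤ // k ≤ z}, p k
  have hc : HasSum ((Set.Iic z).indicator p) c := by
    have := (hp.summable.indicator (Set.Iic z)).hasSum
    rwa [← tsum_subtype] at this
  have hc0 : 0 ≤ c := tsum_nonneg fun k => by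
    by_cases hk : (k : ℤ) ∈ S
    exacts [(hpos k hk).le, (hnull k hk).ge]
  set h : ℤ → ℝ := fun x => (Set.Iic z).indicator 1 x - c
  have hbound : ∀ x, |h x| ≤ 1 + |c| := fun x =>
    (abs_sub _ _).trans (add_le_add_left (by by_cases hxz : x ≤ z <;> simp [hxz]) _)
  have hmean : HasSum (fun x => p x * h x) 0 := by
    have := hc.sub (hp.mul_left c)
    rw [mul_one, sub_self] at this
    refine this.congr_fun fun x => ?_
    by_cases hxz : x ≤ z <;> simp [h, hxz] <;> ring
  have key := integral_indicator_comp_eq_zero_of_stein hconn ha hpos hnull hX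
    (fun f h1 h2 h3 h4 => hstein f h1 h2 (fun _ => h3) h4) hbound hmean
  rw [integral_indicator_comp_indicator_sub_const hX, sub_eq_zero] at key
  exact cond_apply_eq_ofReal_of_measureReal_inter (hX (.of_discrete)) hposS.ne' hc0 key

theorem stmt_1
    (a : ℤ) (b : WithTop ℤ) (hab : (a : WithTop ℤ) < b)
    (S : Set ℤ) (hS : S = {x : ℤ | a ≤ x ∧ (x : WithTop ℤ) ≤ b})
    (p : ℤ → ℝ)
    (hpos : ∀ x ∈ S, 0 < p x) (hnull : ∀ x ∉ S, p x = 0)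
    (hmass : ∑' x : S, p x = 1)
    {Ω : Type*} [MeasurableSpace Ω] (μ : Measure Ω) [IsProbabilityMeasure μ]
    (X : Ω → ℤ) (hX : Measurable X)
    (hposS : 0 < μ {ω | X ω ∈ S})
    (hstein : ∀ f : ℤ → ℝ,
      f a = 0 →
      (∃ M : ℝ, ∀ x ∈ S, |f x * p x| ≤ M) →
      (b = ⊤ → Tendsto (fun x : ℤ => f x * p x) atTop (nhds 0)) →
      Integrable (fun ω => T1 S f p (X ω)) μ →
      (∫ ω, T1 S f p (X ω) ∂μ) = 0) :
    ∀ z : ℤ, (μ[|{ω | X ω ∈ S}]) {ω | X ω ≤ z}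
      = ENNReal.ofReal (∑' k : {k : ℤ // k ≤ z}, p (k : ℤ)) :=
  stmt_1_general a b S hS p hpos hnull hmass μ X hX hposS hstein
end

section
/- Let Θ ⊆ ℝ be open and θ ∈ Θ. Let a ∈ ℤ, b ∈ ℤ ∪ {+∞} with a < b, and let {p_η}_{η ∈ Θ} be a family of densities, each with the same support S_p = {a, a+1, …, b}, such that for each x ∈ S_p the map η ↦ p_η(x) is differentiable at θ. Set p := p_θ and p̃(x) := (d/dη)(p_η(x)/p_η(a))|_{η=θ} for x ∈ S_p, p̃(x) := 0 for x ∉ S_p (note p̃(a) = 0). Let Z be a random variable with law p. Then for every f : ℤ → ℝ such that x ↦ f(x)p̃(x) is bounded on S_p, Σ_{x ∈ S_p} |f(x+1)p̃(x+1) − f(x)p̃(x)| < ∞, and (in case b = +∞) f(x)p̃(x) → 0 as x → +∞, one has E[T2(f,p)(Z)] = 0. -/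
/-!
Write `g = f · p̃`. On the support the weight `p(x)` cancels the denominator of `T2`, so
`E[T2(f,p)(Z)] = ∑_{x ∈ S} (g(x+1) - g(x))`, a series that converges absolutely by assumption.
It telescopes to `g(b+1) - g(a)`, read as `lim g - g(a)` when `b = ∞`. Here `g(b+1) = 0` since
`b + 1 ∉ S`, the limit vanishes by assumption, and `g(a) = 0` because `p̃(a)` is the derivative
of `η ↦ p_η(a)/p_η(a)`, which is constant near `θ`.
-/

open MeasureTheory Filter

/-- The operator `T2` associated with a density `p` with support `S` and a function `p̃`:
`T2(f,p)(x) = (f(x+1)p̃(x+1) - f(x)p̃(x))/p(x)` for `x ∈ S`, and `0` otherwise. -/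
noncomputable def T2 (S : Set ℤ) (f ptil p : ℤ → ℝ) : ℤ → ℝ :=
  S.indicator (fun x => (f (x + 1) * ptil (x + 1) - f x * ptil x) / p x)

open scoped fwdDiff Topology

lemma HasDerivAt.eq_zero_of_div_self {u : ℝ → ℝ} {θ c : ℝ} (hu : ∀ᶠ η in 𝓝 θ, u η ≠ 0)
    (h : HasDerivAt (fun η => u η / u η) c θ) : c = 0 :=
  h.unique <| (hasDerivAt_const θ 1).congr_of_eventuallyEq <| hu.mono fun _ hη => div_self hη

lemma integrable_of_summable_measureReal_mul_norm {α E : Type*} [MeasurableSpace α] [Countable α]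
    [MeasurableSingletonClass α] [NormedAddCommGroup E] {μ : Measure α} [IsFiniteMeasure μ]
    {f : α → E} (h : Summable fun x => μ.real {x} * ‖f x‖) : Integrable f μ := by
  rw [← Measure.sum_smul_dirac μ]
  exact integrable_sum_dirac (fun _ => measure_ne_top _ _) h

lemma T2_eq_indicator_fwdDiff (S : Set ℤ) (f ptil p : ℤ → ℝ) :
    T2 S f ptil p = S.indicator fun x => Δ_[1] (f * ptil) x / p x :=
  rfl

section Integral

variable {S : Set ℤ} {f ptil p : ℤ → ℝ} {ν : Measure ℤ}

lemma measureReal_singleton_mul_T2 (hν : ∀ x ∈ S, ν.real {x} = p x) (hp : ∀ x ∈ S, p x ≠ 0)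
    (x : ℤ) : ν.real {x} * T2 S f ptil p x = S.indicator (Δ_[1] (f * ptil)) x := by
  by_cases hx : x ∈ S
  · rw [T2_eq_indicator_fwdDiff, Set.indicator_of_mem hx, Set.indicator_of_mem hx, hν x hx,
      mul_div_cancel₀ _ (hp x hx)]
  · simp [T2, hx]

lemma integral_T2_eq_tsum [IsFiniteMeasure ν] (hν : ∀ x ∈ S, ν.real {x} = p x)
    (hp : ∀ x ∈ S, p x ≠ 0) (hs : Summable fun x : S => |Δ_[1] (f * ptil) x|) :
    ∫ x, T2 S f ptil p x ∂ν = ∑' x, S.indicator (Δ_[1] (f * ptil)) x := by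
  have hmul := measureReal_singleton_mul_T2 (f := f) (ptil := ptil) hν hp
  have hint : Integrable (T2 S f ptil p) ν := by
    have hs' : Summable (S.indicator fun x => |Δ_[1] (f * ptil) x|) :=
      summable_subtype_iff_indicator.mp hs
    refine integrable_of_summable_measureReal_mul_norm (hs'.congr fun x => ?_)
    rw [Real.norm_eq_abs, ← abs_of_nonneg (measureReal_nonneg (μ := ν) (s := {x})), ← abs_mul,
      hmul]
    by_cases hx : x ∈ S <;> simp [hx]
  simp_rw [integral_countable hint, smul_eq_mul, hmul]

end Integral

section Telescoping

variable {G : Type*} [AddCommGroup G]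

lemma Finset.sum_Icc_fwdDiff (g : ℤ → G) {a c : ℤ} (hac : a ≤ c) :
    ∑ x ∈ Finset.Icc a c, Δ_[1] g x = g (c + 1) - g a := by
  induction c, hac using Int.leInduction with
  | base => simp [fwdDiff]
  | succ d hd ih =>
    rw [← Finset.insert_Icc_right_eq_Icc_add_one (by omega), Finset.sum_insert (by simp), ih,
      fwdDiff]
    abel

variable [TopologicalSpace G]

lemma hasSum_indicator_Icc_fwdDiff (g : ℤ → G) {a c : ℤ} (hac : a ≤ c) :
    HasSum ((Set.Icc a c).indicator (Δ_[1] g)) (g (c + 1) - g a) := by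
  have h : HasSum ((Set.Icc a c).indicator (Δ_[1] g))
      (∑ x ∈ Finset.Icc a c, (Set.Icc a c).indicator (Δ_[1] g) x) :=
    hasSum_sum_of_ne_finset_zero fun x hx => Set.indicator_of_notMem (by simpa using hx) _
  rwa [Finset.sum_congr rfl fun x hx => Set.indicator_of_mem (by simpa using hx) _,
    Finset.sum_Icc_fwdDiff g hac] at h

lemma hasSum_indicator_Ici_fwdDiff [IsTopologicalAddGroup G] [T2Space G] (g : ℤ → G) (a : ℤ)
    {l : G} (hs : Summable ((Set.Ici a).indicator (Δ_[1] g))) (hg : Tendsto g atTop (𝓝 l)) :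
    HasSum ((Set.Ici a).indicator (Δ_[1] g)) (l - g a) := by
  have hinj : Function.Injective fun n : ℕ => a + n := fun m n h => by simpa using h
  have hrange : ∀ x ∉ Set.range fun n : ℕ => a + n, (Set.Ici a).indicator (Δ_[1] g) x = 0 := by
    refine fun x hx => Set.indicator_of_notMem (fun hax => hx ⟨(x - a).toNat, ?_⟩) _
    simp only [Set.mem_Ici] at hax
    show a + ((x - a).toNat : ℤ) = x
    omega
  set g' : ℕ → G := fun n => g (a + n)
  have hcomp : (Set.Ici a).indicator (Δ_[1] g) ∘ (fun n : ℕ => a + n) =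
      fun n => g' (n + 1) - g' n := by
    ext n
    simp [g', fwdDiff, add_assoc]
  have hg' : Tendsto g' atTop (𝓝 l) :=
    hg.comp (tendsto_atTop_add_const_left atTop a tendsto_natCast_atTop_atTop)
  have hg'0 : g' 0 = g a := by simp [g']
  rw [← hinj.hasSum_iff hrange, hcomp, ← hg'0]
  rw [← hinj.summable_iff hrange, hcomp] at hs
  refine hs.hasSum_iff.mpr (tendsto_nhds_unique hs.hasSum.tendsto_sum_nat ?_)
  simpa only [Finset.sum_range_sub] using hg'.sub_const (g' 0)

end Telescoping

theorem stmt_3_general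
    (Θ : Set ℝ) (hΘ : IsOpen Θ) (θ : ℝ) (hθ : θ ∈ Θ)
    (a : ℤ) (b : WithTop ℤ) (hab : (a : WithTop ℤ) < b)
    (S : Set ℤ) (hS : S = {x : ℤ | a ≤ x ∧ (x : WithTop ℤ) ≤ b})
    (P : ℝ → ℤ → ℝ)
    (hpos : ∀ η ∈ Θ, ∀ x ∈ S, 0 < P η x)
    (ptil : ℤ → ℝ)
    (hderiv : ∀ x ∈ S, HasDerivAt (fun η => P η x / P η a) (ptil x) θ)
    (hptilnull : ∀ x ∉ S, ptil x = 0)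
    {Ω : Type*} [MeasurableSpace Ω] (μ : Measure Ω) [IsProbabilityMeasure μ]
    (Z : Ω → ℤ) (hZ : Measurable Z)
    (hlaw : ∀ x : ℤ, μ (Z ⁻¹' {x}) = ENNReal.ofReal (P θ x))
    (f : ℤ → ℝ)
    (hsummable : Summable
      (fun x : S => |f ((x : ℤ) + 1) * ptil ((x : ℤ) + 1) - f (x : ℤ) * ptil (x : ℤ)|))
    (hlim : b = ⊤ → Tendsto (fun x : ℤ => f x * ptil x) atTop (nhds 0)) :
    (∫ ω, T2 S f ptil (P θ) (Z ω) ∂μ) = 0 := by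
  have haS : a ∈ S := hS ▸ ⟨le_rfl, hab.le⟩
  have hptila : ptil a = 0 := (hderiv a haS).eq_zero_of_div_self <|
    mem_of_superset (hΘ.mem_nhds hθ) fun η hη => (hpos η hη a haS).ne'
  have hlawS : ∀ x ∈ S, (μ.map Z).real {x} = P θ x := fun x hx => by
    rw [measureReal_def, Measure.map_apply hZ (measurableSet_singleton x), hlaw,
      ENNReal.toReal_ofReal (hpos θ hθ x hx).le]
  rw [← integral_map hZ.aemeasurable (measurable_of_countable _).aestronglyMeasurable,
    integral_T2_eq_tsum hlawS (fun x hx => (hpos θ hθ x hx).ne') hsummable]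
  refine HasSum.tsum_eq ?_
  cases b using WithTop.recTopCoe with
  | top =>
    have hSIci : S = Set.Ici a := by ext; simp [hS]
    subst hSIci
    simpa [hptila] using hasSum_indicator_Ici_fwdDiff (f * ptil) a
      (summable_subtype_iff_indicator.mp hsummable.of_abs) (hlim rfl)
  | coe c =>
    have hSIcc : S = Set.Icc a c := by ext; simp [hS]
    subst hSIcc
    have hc : c + 1 ∉ Set.Icc a c := fun h => by simp at h
    simpa [hptila, hptilnull _ hc] using hasSum_indicator_Icc_fwdDiff (f * ptil)
      (WithTop.coe_lt_coe.mp hab).le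

theorem stmt_3
    (Θ : Set ℝ) (hΘ : IsOpen Θ) (θ : ℝ) (hθ : θ ∈ Θ)
    (a : ℤ) (b : WithTop ℤ) (hab : (a : WithTop ℤ) < b)
    (S : Set ℤ) (hS : S = {x : ℤ | a ≤ x ∧ (x : WithTop ℤ) ≤ b})
    (P : ℝ → ℤ → ℝ)
    (hpos : ∀ η ∈ Θ, ∀ x ∈ S, 0 < P η x)
    (hnull : ∀ η ∈ Θ, ∀ x ∉ S, P η x = 0)
    (hmass : ∀ η ∈ Θ, ∑' x : S, P η (x : ℤ) = 1)
    (ptil : ℤ → ℝ)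
    (hderiv : ∀ x ∈ S, HasDerivAt (fun η => P η x / P η a) (ptil x) θ)
    (hptilnull : ∀ x ∉ S, ptil x = 0)
    {Ω : Type*} [MeasurableSpace Ω] (μ : Measure Ω) [IsProbabilityMeasure μ]
    (Z : Ω → ℤ) (hZ : Measurable Z)
    (hlaw : ∀ x : ℤ, μ (Z ⁻¹' {x}) = ENNReal.ofReal (P θ x))
    (f : ℤ → ℝ)
    (hbdd : ∃ M : ℝ, ∀ x ∈ S, |f x * ptil x| ≤ M)
    (hsummable : Summable
      (fun x : S => |f ((x : ℤ) + 1) * ptil ((x : ℤ) + 1) - f (x : ℤ) * ptil (x : ℤ)|))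
    (hlim : b = ⊤ → Tendsto (fun x : ℤ => f x * ptil x) atTop (nhds 0)) :
    (∫ ω, T2 S f ptil (P θ) (Z ω) ∂μ) = 0 :=
  stmt_3_general Θ hΘ θ hθ a b hab S hS P hpos ptil hderiv hptilnull μ Z hZ hlaw f hsummable hlim
end

section
/- Let Θ ⊆ ℝ be open and θ ∈ Θ. Let a ∈ ℤ, b ∈ ℤ ∪ {+∞} with a < b, and let {p_η}_{η ∈ Θ} be a family of densities, each with the same support S_p = {a, a+1, …, b}, such that for each x ∈ S_p the map η ↦ p_η(x) is differentiable at θ. Set p := p_θ and p̃(x) := (d/dη)(p_η(x)/p_η(a))|_{η=θ} for x ∈ S_p, p̃(x) := 0 for x ∉ S_p, and assume p̃(x) ≠ 0 for every x ∈ S_p with x > a. Let X be a ℤ-valued random variable with P(X ∈ S_p) > 0 such that E[T2(f,p)(X)] = 0 for every f : ℤ → ℝ with x ↦ f(x)p̃(x) bounded on S_p, (in case b = +∞) f(x)p̃(x) → 0 as x → +∞, and T2(f,p)(X) integrable. Then for all z ∈ ℤ, P(X ≤ z | X ∈ S_p) = Σ_{k ≤ z} p(k). -/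
open MeasureTheory Filter ProbabilityTheory

open Topology

/-!
Put `c = ∑_{k ≤ z} p k` and `h = 1_{(-∞, z]} - c`, which has `p`-mean zero. The discrete Stein
equation `T2(f, p) = h` on `S` is then solved by `f p̃ = g` with `g x = ∑_{a ≤ k < x} p k h k`:
`g` vanishes at `a` and beyond `b` (the only places where `p̃` may vanish), is bounded by
`∑ p |h|`, and tends to `∑ p h = 0`. Testing the hypothesis on this `f` gives
`P(X ∈ S, X ≤ z) = c P(X ∈ S)`.
-/

theorem HasSum.tendsto_sum_Ico {M : Type*} [AddCommMonoid M] [TopologicalSpace M]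
    {w : ℤ → M} {s : M} (hw : HasSum w s) {a : ℤ} (hsupp : ∀ k < a, w k = 0) :
    Tendsto (fun x => ∑ k ∈ Finset.Ico a x, w k) atTop (𝓝 s) := by
  refine (hw.comp Finset.tendsto_Ico_neg_atTop_atTop).congr' ?_
  filter_upwards [eventually_ge_atTop (-a), eventually_ge_atTop a] with x hx₁ hx₂
  refine (Finset.sum_subset (fun k hk => ?_) (fun k hk hk' => hsupp k ?_)).symm
  · simp only [Finset.mem_Ico] at hk ⊢
    omega
  · simp only [Finset.mem_Ico, not_and, not_lt] at hk hk'
    omega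

theorem T2_eq_indicator_of_mul_eq {S : Set ℤ} {f ptil p g : ℤ → ℝ}
    (hg : ∀ x, f x * ptil x = g x) :
    T2 S f ptil p = S.indicator (fun x => (g (x + 1) - g x) / p x) := by
  simp only [T2, hg]

theorem exists_T2_eq_indicator {a : ℤ} {b : WithTop ℤ} {S : Set ℤ}
    (hS : S = {x : ℤ | a ≤ x ∧ (x : WithTop ℤ) ≤ b}) {p ptil h : ℤ → ℝ}
    (hpos : ∀ x ∈ S, 0 < p x) (hnull : ∀ x ∉ S, p x = 0)
    (hptilne : ∀ x ∈ S, a < x → ptil x ≠ 0) (hh : HasSum (fun x => p x * h x) 0) :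
    ∃ f : ℤ → ℝ, (∃ M : ℝ, ∀ x, |f x * ptil x| ≤ M) ∧
      Tendsto (fun x => f x * ptil x) atTop (𝓝 0) ∧ T2 S f ptil p = S.indicator h := by
  subst hS
  set g : ℤ → ℝ := fun x => ∑ k ∈ Finset.Ico a x, p k * h k
  have hg_succ : ∀ x, a ≤ x → g (x + 1) = g x + p x * h x := fun x hx =>
    (Finset.sum_Ico_add_eq_sum_Ico_add_one hx _).symm
  have hg_zero : ∀ x, ptil x = 0 → g x = 0 := by
    intro x hx
    by_cases hxa : x ≤ a
    · exact Finset.sum_eq_zero fun k hk => by simp only [Finset.mem_Ico] at hk; omega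
    have hxb : ¬ (x : WithTop ℤ) ≤ b := fun hxb => hptilne x ⟨by omega, hxb⟩ (by omega) hx
    rw [← hh.tsum_eq]
    refine (tsum_eq_sum fun k hk => ?_).symm
    rw [hnull k fun hk' => ?_, zero_mul]
    simp only [Finset.mem_Ico, not_and, not_lt] at hk
    exact hxb (le_trans (by exact_mod_cast hk hk'.1) hk'.2)
  have hfg : ∀ x, g x / ptil x * ptil x = g x := fun x => div_mul_cancel_of_imp (hg_zero x)
  refine ⟨fun x => g x / ptil x, ⟨∑' k, |p k * h k|, fun x => ?_⟩, ?_, ?_⟩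
  · rw [hfg]
    exact (Finset.abs_sum_le_sum_abs _ _).trans
      (hh.summable.abs.sum_le_tsum _ fun _ _ => abs_nonneg _)
  · simpa only [hfg] using hh.tendsto_sum_Ico fun k hk => by
      rw [hnull k fun hk' => absurd hk'.1 (by omega), zero_mul]
  · rw [T2_eq_indicator_of_mul_eq hfg]
    refine Set.indicator_congr fun x hx => ?_
    rw [hg_succ x hx.1, add_sub_cancel_left, mul_div_cancel_left₀ _ (hpos x hx).ne']

theorem hasSum_of_tsum_subtype_eq {ι : Type*} {s : Set ι} {p : ι → ℝ} (hnull : ∀ x ∉ s, p x = 0)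
    (hmass : ∑' x : s, p x = 1) : HasSum p 1 := by
  have hsum : Summable fun x : s => p x := by
    by_contra h
    simp [tsum_eq_zero_of_not_summable h] at hmass
  refine (hasSum_subtype_iff_of_support_subset fun x hx => ?_).mp (hmass ▸ hsum.hasSum)
  by_contra hxs
  exact hx (hnull x hxs)

theorem hasSum_mul_indicator_sub_tsum {ι : Type*} {p : ι → ℝ} (hp : HasSum p 1) (s : Set ι) :
    HasSum (fun x => p x * (s.indicator 1 x - ∑' k : s, p k)) 0 := by
  have hsplit : (fun x => p x * (s.indicator 1 x - ∑' k : s, p k)) =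
      fun x => s.indicator p x - p x * ∑' k : s, p k := by
    ext x
    by_cases hx : x ∈ s <;> simp [hx, mul_sub]
  have hs : HasSum (s.indicator p) (∑' k : s, p k) :=
    hasSum_subtype_iff_indicator.mp (hp.summable.subtype s).hasSum
  simpa [hsplit] using hs.sub (hp.mul_right (∑' k : s, p k))

theorem indicator_Iic_sub_const_comp {Ω : Type*} (X : Ω → ℤ) (S : Set ℤ) (z : ℤ) (c : ℝ) :
    (fun ω => S.indicator (fun x => (Set.Iic z).indicator 1 x - c) (X ω)) =
      fun ω => ({ω | X ω ∈ S} ∩ {ω | X ω ≤ z}).indicator 1 ω -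
        c * {ω | X ω ∈ S}.indicator 1 ω := by
  ext ω
  by_cases hS : X ω ∈ S <;> by_cases hz : X ω ≤ z <;> simp [hS, hz]

section Probability

variable {Ω : Type*} [MeasurableSpace Ω] {μ : Measure Ω} {X : Ω → ℤ}

theorem integrable_indicator_one [IsFiniteMeasure μ] {s : Set Ω} (hs : MeasurableSet s) :
    Integrable (s.indicator (1 : Ω → ℝ)) μ :=
  (integrable_const 1).indicator hs

theorem integrable_indicator_Iic_sub_const_comp [IsFiniteMeasure μ] (hX : Measurable X)
    (S : Set ℤ) (z : ℤ) (c : ℝ) :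
    Integrable (fun ω => S.indicator (fun x => (Set.Iic z).indicator 1 x - c) (X ω)) μ := by
  have hA : MeasurableSet {ω | X ω ∈ S} := hX .of_discrete
  rw [indicator_Iic_sub_const_comp]
  exact (integrable_indicator_one (hA.inter (hX measurableSet_Iic))).sub
    ((integrable_indicator_one hA).const_mul c)

theorem integral_indicator_Iic_sub_const_comp [IsFiniteMeasure μ] (hX : Measurable X)
    (S : Set ℤ) (z : ℤ) (c : ℝ) :
    ∫ ω, S.indicator (fun x => (Set.Iic z).indicator 1 x - c) (X ω) ∂μ =
      μ.real ({ω | X ω ∈ S} ∩ {ω | X ω ≤ z}) - c * μ.real {ω | X ω ∈ S} := by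
  have hA : MeasurableSet {ω | X ω ∈ S} := hX .of_discrete
  have hAB : MeasurableSet ({ω | X ω ∈ S} ∩ {ω | X ω ≤ z}) := hA.inter (hX measurableSet_Iic)
  rw [indicator_Iic_sub_const_comp, integral_sub (integrable_indicator_one hAB)
    ((integrable_indicator_one hA).const_mul c), integral_const_mul,
    integral_indicator_one hA, integral_indicator_one hAB]

theorem cond_apply_eq_ofReal [IsFiniteMeasure μ] {A B : Set Ω} (hA : MeasurableSet A)
    (hA0 : μ A ≠ 0) {c : ℝ} (h : μ.real (A ∩ B) = c * μ.real A) :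
    μ[B | A] = ENNReal.ofReal c := by
  have hc : 0 ≤ c := by
    have hApos : 0 < μ.real A := ENNReal.toReal_pos hA0 (measure_ne_top μ A)
    exact nonneg_of_mul_nonneg_left (h ▸ measureReal_nonneg) hApos
  have hAB : μ (A ∩ B) = ENNReal.ofReal c * μ A := by
    rw [← ofReal_measureReal, h, ENNReal.ofReal_mul hc, ofReal_measureReal]
  rw [cond_apply hA, hAB, mul_left_comm, ENNReal.inv_mul_cancel hA0 (measure_ne_top μ A),
    mul_one]

end Probability

theorem stmt_4_general
    (Θ : Set ℝ) (θ : ℝ) (hθ : θ ∈ Θ)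
    (a : ℤ) (b : WithTop ℤ)
    (S : Set ℤ) (hS : S = {x : ℤ | a ≤ x ∧ (x : WithTop ℤ) ≤ b})
    (P : ℝ → ℤ → ℝ)
    (hpos : ∀ η ∈ Θ, ∀ x ∈ S, 0 < P η x)
    (hnull : ∀ η ∈ Θ, ∀ x ∉ S, P η x = 0)
    (hmass : ∀ η ∈ Θ, ∑' x : S, P η (x : ℤ) = 1)
    (ptil : ℤ → ℝ)
    (hptilne : ∀ x ∈ S, a < x → ptil x ≠ 0)
    {Ω : Type*} [MeasurableSpace Ω] (μ : Measure Ω) [IsProbabilityMeasure μ]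
    (X : Ω → ℤ) (hX : Measurable X)
    (hposS : 0 < μ {ω | X ω ∈ S})
    (hstein : ∀ f : ℤ → ℝ,
      (∃ M : ℝ, ∀ x ∈ S, |f x * ptil x| ≤ M) →
      (b = ⊤ → Tendsto (fun x : ℤ => f x * ptil x) atTop (nhds 0)) →
      Integrable (fun ω => T2 S f ptil (P θ) (X ω)) μ →
      (∫ ω, T2 S f ptil (P θ) (X ω) ∂μ) = 0) :
    ∀ z : ℤ, (μ[|{ω | X ω ∈ S}]) {ω | X ω ≤ z}
      = ENNReal.ofReal (∑' k : {k : ℤ // k ≤ z}, P θ (k : ℤ)) := by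
  intro z
  obtain ⟨f, ⟨M, hM⟩, hlim, hT2⟩ := exists_T2_eq_indicator hS (hpos θ hθ) (hnull θ hθ) hptilne
    (hasSum_mul_indicator_sub_tsum (hasSum_of_tsum_subtype_eq (hnull θ hθ) (hmass θ hθ))
      (Set.Iic z))
  have h0 := hstein f ⟨M, fun x _ => hM x⟩ (fun _ => hlim)
    (hT2 ▸ integrable_indicator_Iic_sub_const_comp hX S z _)
  rw [hT2, integral_indicator_Iic_sub_const_comp hX, sub_eq_zero] at h0
  exact cond_apply_eq_ofReal (hX .of_discrete) hposS.ne' h0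

theorem stmt_4
    (Θ : Set ℝ) (hΘ : IsOpen Θ) (θ : ℝ) (hθ : θ ∈ Θ)
    (a : ℤ) (b : WithTop ℤ) (hab : (a : WithTop ℤ) < b)
    (S : Set ℤ) (hS : S = {x : ℤ | a ≤ x ∧ (x : WithTop ℤ) ≤ b})
    (P : ℝ → ℤ → ℝ)
    (hpos : ∀ η ∈ Θ, ∀ x ∈ S, 0 < P η x)
    (hnull : ∀ η ∈ Θ, ∀ x ∉ S, P η x = 0)
    (hmass : ∀ η ∈ Θ, ∑' x : S, P η (x : ℤ) = 1)
    (ptil : ℤ → ℝ)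
    (hderiv : ∀ x ∈ S, HasDerivAt (fun η => P η x / P η a) (ptil x) θ)
    (hptilnull : ∀ x ∉ S, ptil x = 0)
    (hptilne : ∀ x ∈ S, a < x → ptil x ≠ 0)
    {Ω : Type*} [MeasurableSpace Ω] (μ : Measure Ω) [IsProbabilityMeasure μ]
    (X : Ω → ℤ) (hX : Measurable X)
    (hposS : 0 < μ {ω | X ω ∈ S})
    (hstein : ∀ f : ℤ → ℝ,
      (∃ M : ℝ, ∀ x ∈ S, |f x * ptil x| ≤ M) →
      (b = ⊤ → Tendsto (fun x : ℤ => f x * ptil x) atTop (nhds 0)) →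
      Integrable (fun ω => T2 S f ptil (P θ) (X ω)) μ →
      (∫ ω, T2 S f ptil (P θ) (X ω) ∂μ) = 0) :
    ∀ z : ℤ, (μ[|{ω | X ω ∈ S}]) {ω | X ω ≤ z}
      = ENNReal.ofReal (∑' k : {k : ℤ // k ≤ z}, P θ (k : ℤ)) :=
  stmt_4_general Θ θ hθ a b S hS P hpos hnull hmass ptil hptilne μ X hX hposS hstein
end

section
/- Let p be a density with support ℕ = {0,1,2,…} and let l : ℕ → ℝ be such that Σ_{k≥0} l(k)p(k) converges absolutely; set E_p[l] := Σ_{k≥0} l(k)p(k). Define f_{1,l}^p(x) := (1/p(x)) Σ_{k=0}^{x−1} (l(k) − E_p[l]) p(k) for x ∈ ℕ (empty sums equal 0). Then f_{1,l}^p solves the Stein equation: T1(f_{1,l}^p, p)(x) = l(x) − E_p[l] for every x ∈ ℕ. -/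
theorem T1_apply_of_mem {S : Set ℤ} {f p : ℤ → ℝ} {x : ℤ} (hx : x ∈ S) :
    T1 S f p x = (f (x + 1) * p (x + 1) - f x * p x) / p x :=
  Set.indicator_of_mem hx _

theorem T1_nonneg_eq_of_mul_eq_sum {f p : ℤ → ℝ} {g : ℕ → ℝ}
    (hfp : ∀ x : ℤ, 0 ≤ x → f x * p x = ∑ k ∈ Finset.range x.toNat, g k)
    {x : ℤ} (hx : 0 ≤ x) :
    T1 {y : ℤ | 0 ≤ y} f p x = g x.toNat / p x := by
  have hsucc : (x + 1).toNat = x.toNat + 1 := Int.toNat_add_nat hx 1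
  rw [T1_apply_of_mem (show x ∈ {y : ℤ | 0 ≤ y} from hx), hfp x hx, hfp (x + 1) (by omega),
    hsucc, Finset.sum_range_succ, add_sub_cancel_left]

theorem stmt_8_general
    (p : ℤ → ℝ)
    (hppos : ∀ x : ℤ, 0 ≤ x → 0 < p x)
    (l : ℕ → ℝ)
    (E : ℝ)
    (f : ℤ → ℝ)
    (hf : ∀ x : ℤ, 0 ≤ x →
      f x = (1 / p x) * ∑ k ∈ Finset.range x.toNat, (l k - E) * p (k : ℤ)) :
    ∀ x : ℤ, 0 ≤ x → T1 {y : ℤ | 0 ≤ y} f p x = l x.toNat - E := by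
  have hfp : ∀ x : ℤ, 0 ≤ x →
      f x * p x = ∑ k ∈ Finset.range x.toNat, (l k - E) * p (k : ℤ) := fun x hx => by
    rw [hf x hx, one_div_mul_eq_div, div_mul_cancel₀ _ (hppos x hx).ne']
  intro x hx
  rw [T1_nonneg_eq_of_mul_eq_sum hfp hx, Int.toNat_of_nonneg hx,
    mul_div_cancel_right₀ _ (hppos x hx).ne']

theorem stmt_8
    (p : ℤ → ℝ)
    (hppos : ∀ x : ℤ, 0 ≤ x → 0 < p x) (hpnull : ∀ x : ℤ, ¬ 0 ≤ x → p x = 0)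
    (hpmass : ∑' x : ℕ, p (x : ℤ) = 1)
    (l : ℕ → ℝ)
    (habs : Summable (fun k : ℕ => |l k * p (k : ℤ)|))
    (E : ℝ) (hE : E = ∑' k : ℕ, l k * p (k : ℤ))
    (f : ℤ → ℝ)
    (hf : ∀ x : ℤ, 0 ≤ x →
      f x = (1 / p x) * ∑ k ∈ Finset.range x.toNat, (l k - E) * p (k : ℤ)) :
    ∀ x : ℤ, 0 ≤ x → T1 {y : ℤ | 0 ≤ y} f p x = l x.toNat - E :=
  stmt_8_general p hppos l E f hf
end

section
/- Let p be a density with support ℕ = {0,1,2,…}, let N ∈ ℕ, and let q be a density with support {0,…,N}. Let l : ℕ → ℝ be such that E_p[l] := Σ_{k≥0} l(k)p(k) converges absolutely, and define f_{1,l}^p(x) := (1/p(x)) Σ_{k=0}^{x−1} (l(k) − E_p[l]) p(k) for x ∈ ℕ. Define the generalized score function r1(p,q)(x) := p(x+1)/p(x) − q(x+1)/q(x) for 0 ≤ x ≤ N−1 and r1(p,q)(N) := p(N+1)/p(N). Then Σ_{x=0}^N l(x)q(x) − E_p[l] = Σ_{x=0}^N q(x) f_{1,l}^p(x+1) r1(p,q)(x).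 -/
/-! With `S n = ∑_{k<n} (l k - E) p k` we have `f (x+1) = S (x+1) / p (x+1)`, and each summand
`q x f(x+1) r x` equals `T x - T (x+1) + q x (l x - E)` for `T n = q n S n / p n`. The sum telescopes;
its boundary terms vanish because `S 0 = 0` and `q (N+1) = 0`, and `∑ q = 1` turns
`∑ q x (l x - E)` into `∑ l x q x - E`. -/

open Finset

theorem mul_partialSum_div_mul_ratio_sub_eq {p q : ℕ → ℝ} (g : ℕ → ℝ) {x : ℕ}
    (hpx : p x ≠ 0) (hpx' : p (x + 1) ≠ 0) (hqx : q x ≠ 0) :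
    q x * ((∑ k ∈ range (x + 1), g k * p k) / p (x + 1)) * (p (x + 1) / p x - q (x + 1) / q x)
      = q x * (∑ k ∈ range x, g k * p k) / p x
        - q (x + 1) * (∑ k ∈ range (x + 1), g k * p k) / p (x + 1) + q x * g x := by
  rw [sum_range_succ]
  field_simp
  ring

theorem sum_range_mul_partialSum_div_mul_ratio_sub_eq {p q : ℕ → ℝ} (g : ℕ → ℝ) {N : ℕ}
    (hp : ∀ x ≤ N + 1, p x ≠ 0) (hq : ∀ x ≤ N, q x ≠ 0) (hqN : q (N + 1) = 0) :
    ∑ x ∈ range (N + 1),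
        q x * ((∑ k ∈ range (x + 1), g k * p k) / p (x + 1)) * (p (x + 1) / p x - q (x + 1) / q x)
      = ∑ x ∈ range (N + 1), q x * g x := by
  have hsummand : ∀ x ∈ range (N + 1), _ := fun x hx =>
    have hx : x ≤ N := Nat.lt_succ_iff.mp (mem_range.mp hx)
    mul_partialSum_div_mul_ratio_sub_eq g (hp x (by omega)) (hp (x + 1) (by omega)) (hq x hx)
  rw [sum_congr rfl hsummand, sum_add_distrib,
    sum_range_sub' (fun n => q n * (∑ k ∈ range n, g k * p k) / p n)]
  simp [hqN]

theorem stmt_9_general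
    (p : ℤ → ℝ)
    (hppos : ∀ x : ℤ, 0 ≤ x → 0 < p x)
    (N : ℕ) (q : ℤ → ℝ)
    (hqpos : ∀ x : ℤ, 0 ≤ x → x ≤ (N : ℤ) → 0 < q x)
    (hqnull : ∀ x : ℤ, ¬ (0 ≤ x ∧ x ≤ (N : ℤ)) → q x = 0)
    (hqmass : ∑ x ∈ Finset.range (N + 1), q (x : ℤ) = 1)
    (l : ℕ → ℝ)
    (E : ℝ)
    (f : ℤ → ℝ)
    (hf : ∀ x : ℤ, 0 ≤ x →
      f x = (1 / p x) * ∑ k ∈ Finset.range x.toNat, (l k - E) * p (k : ℤ))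
    (r : ℕ → ℝ)
    (hr : ∀ x : ℕ, x < N → r x = p ((x : ℤ) + 1) / p (x : ℤ) - q ((x : ℤ) + 1) / q (x : ℤ))
    (hrN : r N = p ((N : ℤ) + 1) / p (N : ℤ)) :
    (∑ x ∈ Finset.range (N + 1), l x * q (x : ℤ)) - E
      = ∑ x ∈ Finset.range (N + 1), q (x : ℤ) * f ((x : ℤ) + 1) * r x := by
  have hqN : q ((N : ℤ) + 1) = 0 := hqnull _ (by omega)
  have hr' : ∀ x ≤ N, r x = p ((x : ℤ) + 1) / p x - q ((x : ℤ) + 1) / q x := by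
    intro x hx
    rcases hx.lt_or_eq with hx | rfl
    · exact hr x hx
    · rw [hrN, hqN, zero_div, sub_zero]
  have hf' : ∀ x : ℕ, f ((x : ℤ) + 1)
      = (∑ k ∈ range (x + 1), (l k - E) * p (k : ℤ)) / p ((x : ℤ) + 1) := by
    intro x
    rw [hf _ (by omega), one_div_mul_eq_div, show ((x : ℤ) + 1).toNat = x + 1 by omega]
  have hsum := sum_range_mul_partialSum_div_mul_ratio_sub_eq (p := fun n : ℕ => p n)
    (q := fun n : ℕ => q n) (fun k => l k - E) (N := N)
    (fun x _ => (hppos x (by omega)).ne') (fun x hx => (hqpos x (by omega) (by omega)).ne')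
    (by exact_mod_cast hqN)
  push_cast at hsum
  calc (∑ x ∈ range (N + 1), l x * q x) - E
        = (∑ x ∈ range (N + 1), l x * q x) - (∑ x ∈ range (N + 1), q x) * E := by
          rw [hqmass, one_mul]
    _ = ∑ x ∈ range (N + 1), q x * (l x - E) := by
          rw [sum_mul, ← sum_sub_distrib]
          exact sum_congr rfl fun _ _ => by ring
    _ = _ := hsum.symm
    _ = _ := sum_congr rfl fun x hx => by
        rw [hf' x, hr' x (Nat.lt_succ_iff.mp (mem_range.mp hx))]

theorem stmt_9
    (p : ℤ → ℝ)
    (hppos : ∀ x : ℤ, 0 ≤ x → 0 < p x) (hpnull : ∀ x : ℤ, ¬ 0 ≤ x → p x = 0)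
    (hpmass : ∑' x : ℕ, p (x : ℤ) = 1)
    (N : ℕ) (q : ℤ → ℝ)
    (hqpos : ∀ x : ℤ, 0 ≤ x → x ≤ (N : ℤ) → 0 < q x)
    (hqnull : ∀ x : ℤ, ¬ (0 ≤ x ∧ x ≤ (N : ℤ)) → q x = 0)
    (hqmass : ∑ x ∈ Finset.range (N + 1), q (x : ℤ) = 1)
    (l : ℕ → ℝ)
    (habs : Summable (fun k : ℕ => |l k * p (k : ℤ)|))
    (E : ℝ) (hE : E = ∑' k : ℕ, l k * p (k : ℤ))
    (f : ℤ → ℝ)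
    (hf : ∀ x : ℤ, 0 ≤ x →
      f x = (1 / p x) * ∑ k ∈ Finset.range x.toNat, (l k - E) * p (k : ℤ))
    (r : ℕ → ℝ)
    (hr : ∀ x : ℕ, x < N → r x = p ((x : ℤ) + 1) / p (x : ℤ) - q ((x : ℤ) + 1) / q (x : ℤ))
    (hrN : r N = p ((N : ℤ) + 1) / p (N : ℤ)) :
    (∑ x ∈ Finset.range (N + 1), l x * q (x : ℤ)) - E
      = ∑ x ∈ Finset.range (N + 1), q (x : ℤ) * f ((x : ℤ) + 1) * r x :=
  stmt_9_general p hppos N q hqpos hqnull hqmass l E f hf r hr hrN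
end

section
/- Let p be a density with support ℕ = {0,1,2,…} and let p̃ : ℤ → ℝ satisfy p̃(x) = 0 for x ≤ 0 and p̃(x) ≠ 0 for x ≥ 1. Let l : ℕ → ℝ be such that E_p[l] := Σ_{k≥0} l(k)p(k) converges absolutely. Define f_{2,l}^p(x) := (1/p̃(x)) Σ_{k=0}^{x−1} (l(k) − E_p[l]) p(k) for x ≥ 1 and f_{2,l}^p(x) := 0 for x ≤ 0. Then f_{2,l}^p solves the Stein equation: T2(f_{2,l}^p, p)(x) = l(x) − E_p[l] for every x ∈ ℕ. -/
/-! On `ℕ`, `f p̃` is the sequence of partial sums of `(l - E) p`, so `Δ⁺(f p̃)(x)` is the single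
term `(l(x) - E) p(x)`, and dividing by `p(x) > 0` leaves `l(x) - E`. -/

open Finset

lemma mul_eq_sum_range_of_eq_inv_mul_sum {f ptil : ℤ → ℝ} {g : ℕ → ℝ}
    (hptilne : ∀ x : ℤ, 1 ≤ x → ptil x ≠ 0)
    (hf : ∀ x : ℤ, 1 ≤ x → f x = (1 / ptil x) * ∑ k ∈ range x.toNat, g k)
    (hf0 : ∀ x : ℤ, x ≤ 0 → f x = 0) {x : ℤ} (hx : 0 ≤ x) :
    f x * ptil x = ∑ k ∈ range x.toNat, g k := by
  obtain rfl | hx1 := hx.eq_or_lt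
  · simp [hf0 0 le_rfl]
  · rw [hf x hx1, one_div, inv_mul_eq_div, div_mul_cancel₀ _ (hptilne x hx1)]

lemma T2_eq_div_of_mul_eq_sum_range {S : Set ℤ} {f ptil p : ℤ → ℝ} {g : ℕ → ℝ}
    (h : ∀ x : ℤ, 0 ≤ x → f x * ptil x = ∑ k ∈ range x.toNat, g k)
    {x : ℤ} (hx : 0 ≤ x) (hxS : x ∈ S) :
    T2 S f ptil p x = g x.toNat / p x := by
  have hsucc : (x + 1).toNat = x.toNat + 1 := by omega
  rw [T2, Set.indicator_of_mem hxS, h x hx, h (x + 1) (by omega), hsucc, sum_range_succ,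
    add_sub_cancel_left]

theorem stmt_11_general
    (p : ℤ → ℝ)
    (hppos : ∀ x : ℤ, 0 ≤ x → 0 < p x)
    (ptil : ℤ → ℝ)
    (hptilne : ∀ x : ℤ, 1 ≤ x → ptil x ≠ 0)
    (l : ℕ → ℝ)
    (E : ℝ)
    (f : ℤ → ℝ)
    (hf : ∀ x : ℤ, 1 ≤ x →
      f x = (1 / ptil x) * ∑ k ∈ Finset.range x.toNat, (l k - E) * p (k : ℤ))
    (hf0 : ∀ x : ℤ, x ≤ 0 → f x = 0) :
    ∀ x : ℤ, 0 ≤ x → T2 {y : ℤ | 0 ≤ y} f ptil p x = l x.toNat - E := by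
  intro x hx
  rw [T2_eq_div_of_mul_eq_sum_range
      (fun y hy => mul_eq_sum_range_of_eq_inv_mul_sum hptilne hf hf0 hy) hx hx,
    Int.toNat_of_nonneg hx, mul_div_cancel_right₀ _ (hppos x hx).ne']

theorem stmt_11
    (p : ℤ → ℝ)
    (hppos : ∀ x : ℤ, 0 ≤ x → 0 < p x) (hpnull : ∀ x : ℤ, ¬ 0 ≤ x → p x = 0)
    (hpmass : ∑' x : ℕ, p (x : ℤ) = 1)
    (ptil : ℤ → ℝ)
    (hptil0 : ∀ x : ℤ, x ≤ 0 → ptil x = 0)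
    (hptilne : ∀ x : ℤ, 1 ≤ x → ptil x ≠ 0)
    (l : ℕ → ℝ)
    (habs : Summable (fun k : ℕ => |l k * p (k : ℤ)|))
    (E : ℝ) (hE : E = ∑' k : ℕ, l k * p (k : ℤ))
    (f : ℤ → ℝ)
    (hf : ∀ x : ℤ, 1 ≤ x →
      f x = (1 / ptil x) * ∑ k ∈ Finset.range x.toNat, (l k - E) * p (k : ℤ))
    (hf0 : ∀ x : ℤ, x ≤ 0 → f x = 0) :
    ∀ x : ℤ, 0 ≤ x → T2 {y : ℤ | 0 ≤ y} f ptil p x = l x.toNat - E :=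
  stmt_11_general p hppos ptil hptilne l E f hf hf0
end

section
/- Let p and q be densities, both with support ℕ = {0,1,2,…}, and let p̃ : ℤ → ℝ satisfy p̃(x) = 0 for x ≤ 0 and p̃(x) ≠ 0 for x ≥ 1, and suppose there is a constant c such that p̃(x+1)/p(x) = c for all x ∈ ℕ. Let l : ℕ → ℝ be such that E_p[l] := Σ_{k≥0} l(k)p(k) and E_q[l] := Σ_{k≥0} l(k)q(k) converge absolutely. Define f_{2,l}^p(x) := (1/p̃(x)) Σ_{k=0}^{x−1} (l(k) − E_p[l]) p(k) for x ≥ 1, f_{2,l}^p(0) := 0, and r2(p,q)(x) := (p̃(x+1)/p(x))·(q(x−1)/q(x)) − p̃(x)/p(x) with q(−1) := 0. Assume Σ_{x≥0} q(x)|f_{2,l}^p(x) r2(p,q)(x)| < ∞ and f_{2,l}^p(n+1) q(n) → 0 as n → ∞. Then E_q[l] − E_p[l] = Σ_{x≥0} q(x) f_{2,l}^p(x) r2(p,q)(x). -/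
/-!
Since `c p(x) = p̃(x+1)`, the Stein equation `Δ⁺(f p̃) = (l - E_p[l]) p` rewrites
`q(x) (l(x) - E_p[l]) - q(x) f(x) r₂(x)` as the forward difference at `x` of
`B(x) = c f(x) q(x-1)`. Summed over `x ≥ 0` these differences telescope to
`lim B - B(0) = 0`, because `f(0) = 0` and `B(n+1) = c f(n+1) q(n) → 0`; on the other hand
`Σ q (l - E_p[l]) = E_q[l] - E_p[l]` because `q` has mass one.
-/

open Filter

open Finset fwdDiff

theorem tsum_sub_eq_of_tendsto {G : Type*} [AddCommGroup G] [TopologicalSpace G]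
    [IsTopologicalAddGroup G] [T2Space G] {b : ℕ → G} {L : G}
    (hs : Summable fun n => b (n + 1) - b n) (hb : Tendsto b atTop (nhds L)) :
    ∑' n, (b (n + 1) - b n) = L - b 0 :=
  (hs.hasSum_iff_tendsto_nat.mpr (by simpa only [sum_range_sub] using hb.sub_const (b 0))).tsum_eq

theorem hasSum_mul_sub_const {ι R : Type*} [CommRing R] [TopologicalSpace R]
    [IsTopologicalRing R] {q l : ι → R} {E' : R} (hq : HasSum q 1)
    (hlq : HasSum (fun i => l i * q i) E') (E : R) :
    HasSum (fun i => q i * (l i - E)) (E' - E) := by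
  have h := hlq.sub (hq.mul_left E)
  rw [mul_one] at h
  exact h.congr_fun fun i => by ring

theorem mul_eq_sum_range_of_eq_div {K : Type*} [Field K] {f w : ℤ → K} {g : ℕ → K}
    (hw : ∀ x : ℤ, 1 ≤ x → w x ≠ 0)
    (hf : ∀ x : ℤ, 1 ≤ x → f x = 1 / w x * ∑ k ∈ range x.toNat, g k) (hf0 : f 0 = 0) (n : ℕ) :
    f n * w n = ∑ k ∈ range n, g k := by
  rcases Nat.eq_zero_or_pos n with rfl | hn
  · simp [hf0]
  · have hn' : (1 : ℤ) ≤ n := by exact_mod_cast hn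
    rw [hf n hn', Int.toNat_natCast, one_div, mul_comm, ← mul_assoc, mul_inv_cancel₀ (hw n hn'),
      one_mul]

theorem fwdDiff_mul_eq_of_eq_div {K : Type*} [Field K] {f w : ℤ → K} {g : ℕ → K}
    (hw : ∀ x : ℤ, 1 ≤ x → w x ≠ 0)
    (hf : ∀ x : ℤ, 1 ≤ x → f x = 1 / w x * ∑ k ∈ range x.toNat, g k) (hf0 : f 0 = 0) (n : ℕ) :
    Δ_[1] (f * w) n = g n := by
  have h := mul_eq_sum_range_of_eq_div hw hf hf0
  simp only [fwdDiff, Pi.mul_apply]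
  rw [← Nat.cast_succ, h, h, sum_range_succ, add_sub_cancel_left]

theorem mul_sub_mul_eq_fwdDiff {K : Type*} [Field K] {p q w f r : ℤ → K} {c L : K} {x : ℤ}
    (hp : p x ≠ 0) (hq : q x ≠ 0) (hc : w (x + 1) / p x = c)
    (hr : r x = w (x + 1) / p x * (q (x - 1) / q x) - w x / p x)
    (hΔ : Δ_[1] (f * w) x = L * p x) :
    q x * L - q x * f x * r x = Δ_[1] (fun y => c * f y * q (y - 1)) x := by
  have hw : w (x + 1) = c * p x := by rw [← hc, div_mul_cancel₀ _ hp]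
  simp only [fwdDiff, Pi.mul_apply, add_sub_cancel_right] at hΔ ⊢
  rw [hr, hw, mul_div_cancel_right₀ c hp]
  rw [hw] at hΔ
  field_simp
  linear_combination -(q x) * hΔ

theorem stmt_12_general
    (p q : ℤ → ℝ)
    (hppos : ∀ x : ℤ, 0 ≤ x → 0 < p x)
    (hqpos : ∀ x : ℤ, 0 ≤ x → 0 < q x)
    (hqmass : ∑' x : ℕ, q (x : ℤ) = 1)
    (ptil : ℤ → ℝ)
    (hptilne : ∀ x : ℤ, 1 ≤ x → ptil x ≠ 0)
    (c : ℝ) (hc : ∀ x : ℤ, 0 ≤ x → ptil (x + 1) / p x = c)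
    (l : ℕ → ℝ)
    (habsq : Summable (fun k : ℕ => |l k * q (k : ℤ)|))
    (Ep : ℝ)
    (Eq : ℝ) (hEq : Eq = ∑' k : ℕ, l k * q (k : ℤ))
    (f : ℤ → ℝ)
    (hf : ∀ x : ℤ, 1 ≤ x →
      f x = (1 / ptil x) * ∑ k ∈ Finset.range x.toNat, (l k - Ep) * p (k : ℤ))
    (hf0 : f 0 = 0)
    (r2 : ℤ → ℝ)
    (hr2 : ∀ x : ℤ, 0 ≤ x →
      r2 x = ptil (x + 1) / p x * (q (x - 1) / q x) - ptil x / p x)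
    (habs2 : Summable (fun x : ℕ => q (x : ℤ) * |f (x : ℤ) * r2 (x : ℤ)|))
    (hdecay : Tendsto (fun n : ℕ => f ((n : ℤ) + 1) * q (n : ℤ)) atTop (nhds 0)) :
    Eq - Ep = ∑' x : ℕ, q (x : ℤ) * f (x : ℤ) * r2 (x : ℤ) := by
  set B : ℤ → ℝ := fun y => c * f y * q (y - 1)
  have hq : HasSum (fun n : ℕ => q n) 1 := by
    refine hqmass ▸ Summable.hasSum ?_
    by_contra h
    rw [tsum_eq_zero_of_not_summable h] at hqmass
    exact zero_ne_one hqmass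
  have hmean := hasSum_mul_sub_const hq (hEq ▸ habsq.of_abs.hasSum) Ep
  have hpoint (n : ℕ) : q n * (l n - Ep) = q n * f n * r2 n + (B (n + 1 : ℕ) - B n) := by
    have h := mul_sub_mul_eq_fwdDiff (hppos n n.cast_nonneg).ne' (hqpos n n.cast_nonneg).ne'
      (hc n n.cast_nonneg) (hr2 n n.cast_nonneg) (fwdDiff_mul_eq_of_eq_div hptilne hf hf0 n)
    rw [Nat.cast_succ]
    simp only [fwdDiff] at h
    linarith
  have hfr : Summable fun n : ℕ => q n * f n * r2 n :=
    (habs2.congr fun n => by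
      rw [mul_assoc, abs_mul (q n), abs_of_pos (hqpos n n.cast_nonneg)]).of_abs
  have htel : Summable fun n : ℕ => B (n + 1 : ℕ) - B n :=
    (hmean.summable.sub hfr).congr fun n => by rw [hpoint]; ring
  have hB : Tendsto (fun n : ℕ => B n) atTop (nhds 0) :=
    (tendsto_add_atTop_iff_nat 1).mp (by simpa [B, mul_assoc] using hdecay.const_mul c)
  calc Eq - Ep = ∑' n : ℕ, q n * (l n - Ep) := hmean.tsum_eq.symm
    _ = ∑' n : ℕ, q n * f n * r2 n + ∑' n : ℕ, (B (n + 1 : ℕ) - B n) := by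
      rw [← hfr.tsum_add htel]; exact tsum_congr hpoint
    _ = ∑' n : ℕ, q n * f n * r2 n := by
      rw [tsum_sub_eq_of_tendsto (b := fun n : ℕ => B n) htel hB]
      simp [B, hf0]

theorem stmt_12
    (p q : ℤ → ℝ)
    (hppos : ∀ x : ℤ, 0 ≤ x → 0 < p x) (hpnull : ∀ x : ℤ, ¬ 0 ≤ x → p x = 0)
    (hpmass : ∑' x : ℕ, p (x : ℤ) = 1)
    (hqpos : ∀ x : ℤ, 0 ≤ x → 0 < q x) (hqnull : ∀ x : ℤ, ¬ 0 ≤ x → q x = 0)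
    (hqmass : ∑' x : ℕ, q (x : ℤ) = 1)
    (ptil : ℤ → ℝ)
    (hptil0 : ∀ x : ℤ, x ≤ 0 → ptil x = 0)
    (hptilne : ∀ x : ℤ, 1 ≤ x → ptil x ≠ 0)
    (c : ℝ) (hc : ∀ x : ℤ, 0 ≤ x → ptil (x + 1) / p x = c)
    (l : ℕ → ℝ)
    (habsp : Summable (fun k : ℕ => |l k * p (k : ℤ)|))
    (habsq : Summable (fun k : ℕ => |l k * q (k : ℤ)|))
    (Ep : ℝ) (hEp : Ep = ∑' k : ℕ, l k * p (k : ℤ))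
    (Eq : ℝ) (hEq : Eq = ∑' k : ℕ, l k * q (k : ℤ))
    (f : ℤ → ℝ)
    (hf : ∀ x : ℤ, 1 ≤ x →
      f x = (1 / ptil x) * ∑ k ∈ Finset.range x.toNat, (l k - Ep) * p (k : ℤ))
    (hf0 : f 0 = 0)
    (r2 : ℤ → ℝ)
    (hr2 : ∀ x : ℤ, 0 ≤ x →
      r2 x = ptil (x + 1) / p x * (q (x - 1) / q x) - ptil x / p x)
    (habs2 : Summable (fun x : ℕ => q (x : ℤ) * |f (x : ℤ) * r2 (x : ℤ)|))
    (hdecay : Tendsto (fun n : ℕ => f ((n : ℤ) + 1) * q (n : ℤ)) atTop (nhds 0)) :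
    Eq - Ep = ∑' x : ℕ, q (x : ℤ) * f (x : ℤ) * r2 (x : ℤ) :=
  stmt_12_general p q hppos hqpos hqmass ptil hptilne c hc l habsq Ep Eq hEq f hf hf0 r2 hr2 habs2
    hdecay
end

section
/- Let λ > 0, let N ∈ ℕ, and let q be a density with support {0,…,N}. Let l : ℕ → ℝ be such that E_{Po(λ)}[l] := Σ_{k≥0} l(k) e^{−λ}λ^k/k! converges absolutely, and define f(x) := (x! e^λ/λ^x) Σ_{k=0}^{x−1} (l(k) − E_{Po(λ)}[l]) e^{−λ}λ^k/k! for x ∈ ℕ. Then Σ_{x=0}^N l(x)q(x) − E_{Po(λ)}[l] = Σ_{x=0}^N q(x) · (√λ f(x+1)/(x+1)) · √λ (1 − (x+1)q(x+1)/(λ q(x))), with the convention q(N+1) := 0. -/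
/-!
With `w k = e^{-λ} λ^k / k!`, the function `f` solves the Poisson Stein equation
`λ f(x+1)/(x+1) - f(x) = l(x) - E` with `f 0 = 0`. Multiplying the `x`-th summand out turns it into
`q(x) (f(x) + l(x) - E) - q(x+1) f(x+1)`, so the sum telescopes (as `f 0 = 0` and `q(N+1) = 0`) to
`∑ q(x) (l(x) - E)`, which is the left-hand side because `q` has mass one.
-/

open Finset

noncomputable section

namespace PoissonStein

def poissonWeight (lam : ℝ) (k : ℕ) : ℝ :=
  Real.exp (-lam) * lam ^ k / (k.factorial : ℝ)

def steinSolution (lam : ℝ) (g : ℕ → ℝ) (x : ℕ) : ℝ :=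
  (x.factorial : ℝ) * Real.exp lam / lam ^ x * ∑ k ∈ range x, g k * poissonWeight lam k

variable {lam : ℝ}

lemma factorial_mul_exp_div_pow_mul_poissonWeight (hlam : lam ≠ 0) (x : ℕ) :
    (x.factorial : ℝ) * Real.exp lam / lam ^ x * poissonWeight lam x = 1 := by
  rw [poissonWeight, Real.exp_neg]
  field_simp

@[simp]
lemma steinSolution_zero (g : ℕ → ℝ) : steinSolution lam g 0 = 0 := by
  simp [steinSolution]

lemma steinSolution_succ (hlam : lam ≠ 0) (g : ℕ → ℝ) (x : ℕ) :
    lam * steinSolution lam g (x + 1) / ((x : ℝ) + 1) = steinSolution lam g x + g x := by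
  have hscale : lam * ((x + 1).factorial * Real.exp lam / lam ^ (x + 1)) / ((x : ℝ) + 1)
      = (x.factorial : ℝ) * Real.exp lam / lam ^ x := by
    rw [Nat.factorial_succ, pow_succ]
    push_cast
    field_simp
  have hone := factorial_mul_exp_div_pow_mul_poissonWeight hlam x
  calc lam * steinSolution lam g (x + 1) / ((x : ℝ) + 1)
      = lam * ((x + 1).factorial * Real.exp lam / lam ^ (x + 1)) / ((x : ℝ) + 1)
          * ∑ k ∈ range (x + 1), g k * poissonWeight lam k := by
        rw [steinSolution]
        ring
    _ = steinSolution lam g x + g x := by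
        rw [hscale, sum_range_succ, steinSolution]
        linear_combination g x * hone

end PoissonStein

lemma mul_sqrt_mul_one_sub_ratio {lam q q' F c : ℝ} (hlam : 0 < lam) (hq : q ≠ 0) (hc : c ≠ 0) :
    q * (Real.sqrt lam * F / c) * (Real.sqrt lam * (1 - c * q' / (lam * q)))
      = q * (lam * F / c) - q' * F := by
  have hs : Real.sqrt lam ^ 2 = lam := Real.sq_sqrt hlam.le
  field_simp
  rw [hs]
  ring

lemma sum_range_mul_stein_sub_eq {lam : ℝ} {N : ℕ} {q f g : ℕ → ℝ} (hf0 : f 0 = 0)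
    (hqN : q (N + 1) = 0) (hstein : ∀ x, lam * f (x + 1) / ((x : ℝ) + 1) = f x + g x) :
    ∑ x ∈ range (N + 1), (q x * (lam * f (x + 1) / ((x : ℝ) + 1)) - q (x + 1) * f (x + 1))
      = ∑ x ∈ range (N + 1), q x * g x := by
  have htel := sum_range_sub' (fun x => q x * f x) (N + 1)
  simp only [hf0, hqN, mul_zero, zero_mul, sub_zero] at htel
  simp only [hstein, mul_add, add_sub_right_comm, sum_add_distrib, htel, zero_add]

open PoissonStein in
theorem stmt_13_general
    (lam : ℝ) (hlam : 0 < lam)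
    (N : ℕ) (q : ℤ → ℝ)
    (hqpos : ∀ x : ℤ, 0 ≤ x → x ≤ (N : ℤ) → 0 < q x)
    (hqnull : ∀ x : ℤ, ¬ (0 ≤ x ∧ x ≤ (N : ℤ)) → q x = 0)
    (hqmass : ∑ x ∈ Finset.range (N + 1), q (x : ℤ) = 1)
    (l : ℕ → ℝ)
    (E : ℝ)
    (f : ℕ → ℝ)
    (hf : ∀ x : ℕ, f x = ((Nat.factorial x : ℝ) * Real.exp lam / lam ^ x)
      * ∑ k ∈ Finset.range x, (l k - E) * (Real.exp (-lam) * lam ^ k / (Nat.factorial k : ℝ))) :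
    (∑ x ∈ Finset.range (N + 1), l x * q (x : ℤ)) - E
      = ∑ x ∈ Finset.range (N + 1),
          q (x : ℤ) * (Real.sqrt lam * f (x + 1) / ((x : ℝ) + 1))
            * (Real.sqrt lam * (1 - ((x : ℝ) + 1) * q ((x : ℤ) + 1) / (lam * q (x : ℤ)))) := by
  have hf_eq : f = steinSolution lam (fun k => l k - E) := funext hf
  have hqN : q ((N + 1 : ℕ) : ℤ) = 0 := hqnull _ (by omega)
  calc (∑ x ∈ range (N + 1), l x * q x) - E
      = ∑ x ∈ range (N + 1), l x * q x - E * ∑ x ∈ range (N + 1), q x := by rw [hqmass, mul_one]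
    _ = ∑ x ∈ range (N + 1), q x * (l x - E) := by
        rw [mul_sum, ← sum_sub_distrib]
        exact sum_congr rfl fun x _ => by ring
    _ = ∑ x ∈ range (N + 1), (q x * (lam * f (x + 1) / ((x : ℝ) + 1)) - q ↑(x + 1) * f (x + 1)) :=
        (sum_range_mul_stein_sub_eq (q := fun n : ℕ => q n) (by simp [hf_eq]) hqN
          (by simpa [hf_eq] using steinSolution_succ hlam.ne' _)).symm
    _ = _ := sum_congr rfl fun x hx => by
        have hq : q x ≠ 0 := (hqpos x (by omega) (by have := mem_range.mp hx; omega)).ne'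
        rw [mul_sqrt_mul_one_sub_ratio hlam hq (by positivity), Nat.cast_succ]

theorem stmt_13
    (lam : ℝ) (hlam : 0 < lam)
    (N : ℕ) (q : ℤ → ℝ)
    (hqpos : ∀ x : ℤ, 0 ≤ x → x ≤ (N : ℤ) → 0 < q x)
    (hqnull : ∀ x : ℤ, ¬ (0 ≤ x ∧ x ≤ (N : ℤ)) → q x = 0)
    (hqmass : ∑ x ∈ Finset.range (N + 1), q (x : ℤ) = 1)
    (l : ℕ → ℝ)
    (habs : Summable (fun k : ℕ => |l k * (Real.exp (-lam) * lam ^ k / (Nat.factorial k : ℝ))|))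
    (E : ℝ) (hE : E = ∑' k : ℕ, l k * (Real.exp (-lam) * lam ^ k / (Nat.factorial k : ℝ)))
    (f : ℕ → ℝ)
    (hf : ∀ x : ℕ, f x = ((Nat.factorial x : ℝ) * Real.exp lam / lam ^ x)
      * ∑ k ∈ Finset.range x, (l k - E) * (Real.exp (-lam) * lam ^ k / (Nat.factorial k : ℝ))) :
    (∑ x ∈ Finset.range (N + 1), l x * q (x : ℤ)) - E
      = ∑ x ∈ Finset.range (N + 1),
          q (x : ℤ) * (Real.sqrt lam * f (x + 1) / ((x : ℝ) + 1))
            * (Real.sqrt lam * (1 - ((x : ℝ) + 1) * q ((x : ℤ) + 1) / (lam * q (x : ℤ)))) :=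
  stmt_13_general lam hlam N q hqpos hqnull hqmass l E f hf
end
end

section
/- Let λ > 0 and let q be a density with support ℕ = {0,1,2,…}. Let l : ℕ → ℝ be such that E_{Po(λ)}[l] := Σ_{k≥0} l(k) e^{−λ}λ^k/k! and E_q[l] := Σ_{k≥0} l(k)q(k) converge absolutely. Define f(x) := ((x−1)!/λ^{x−1}) Σ_{k=0}^{x−1} (l(k) − E_{Po(λ)}[l]) e^{−λ}λ^k/k! for x ≥ 1 and f(0) := 0. Assume Σ_{x≥1} q(x)|f(x)(λ q(x−1)/q(x) − x)| < ∞ and f(n+1)q(n) → 0 as n → ∞. Then E_q[l] − E_{Po(λ)}[l] = Σ_{x≥1} q(x) · (λ^{−1} e^{λ} f(x)) · (λ q(x−1)/q(x) − x). -/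
/-!
With `g := λ⁻¹ e^λ f`, the function `g` solves the Stein equation of `Po(λ)`,
`λ g(x+1) - x g(x) = l(x) - E`. Hence `λ q(x) g(x+1) = q(x) (l(x) - E) + x q(x) g(x)`, so the
`x`-th summand on the right is `q(x) (l(x) - E)` plus the increment
`x q(x) g(x) - (x+1) q(x+1) g(x+1)`, and the partial sums telescope to
`∑_{x<n} q(x) (l(x) - E) - n q(n) g(n)`. The boundary term tends to `0` because it is
`λ q(n-1) g(n)` minus a summand of a convergent series.
-/

open Filter Finset

theorem poisson_stein_recursion {lam : ℝ} (hlam : lam ≠ 0) {h f : ℕ → ℝ}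
    (hf : ∀ x : ℕ, 1 ≤ x →
      f x = ((Nat.factorial (x - 1) : ℝ) / lam ^ (x - 1))
        * ∑ k ∈ range x, h k * (Real.exp (-lam) * lam ^ k / (Nat.factorial k : ℝ)))
    (x : ℕ) :
    lam * f (x + 1) - x * f x = lam * Real.exp (-lam) * h x := by
  rcases x with _ | m
  · simp [hf 1 le_rfl]
    ring
  · rw [hf (m + 1 + 1) (by omega), hf (m + 1) (by omega), Nat.add_sub_cancel,
      Nat.add_sub_cancel, sum_range_succ, Nat.factorial_succ]
    set S := ∑ k ∈ range (m + 1), h k * (Real.exp (-lam) * lam ^ k / (Nat.factorial k : ℝ))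
    have hfac : (Nat.factorial m : ℝ) ≠ 0 := by positivity
    push_cast
    field_simp
    ring

section SteinIdentity

variable {lam : ℝ} {q g h : ℕ → ℝ}

theorem sum_range_stein_telescope (hq : ∀ x, q (x + 1) ≠ 0)
    (hg : ∀ x : ℕ, lam * g (x + 1) - x * g x = h x) (n : ℕ) :
    ∑ x ∈ range n, q (x + 1) * g (x + 1) * (lam * q x / q (x + 1) - ((x : ℝ) + 1))
      = ∑ x ∈ range n, q x * h x - n * q n * g n := by
  have hterm : ∀ x : ℕ, q (x + 1) * g (x + 1) * (lam * q x / q (x + 1) - ((x : ℝ) + 1))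
      = q x * h x + ((x : ℝ) * q x * g x - ((x + 1 : ℕ) : ℝ) * q (x + 1) * g (x + 1)) := by
    intro x
    rw [← hg x]
    field_simp [hq x]
    push_cast
    ring
  rw [sum_congr rfl fun x _ => hterm x, sum_add_distrib,
    sum_range_sub' (fun x : ℕ => (x : ℝ) * q x * g x)]
  simp only [Nat.cast_zero, zero_mul, zero_sub]
  ring

theorem hasSum_stein_of_recursion {s : ℝ} (hq : ∀ x, q (x + 1) ≠ 0)
    (hg : ∀ x : ℕ, lam * g (x + 1) - x * g x = h x)
    (hqh : HasSum (fun x => q x * h x) s)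
    (hu : Summable fun x : ℕ => q (x + 1) * g (x + 1) * (lam * q x / q (x + 1) - ((x : ℝ) + 1)))
    (hdecay : Tendsto (fun n => q n * g (n + 1)) atTop (nhds 0)) :
    HasSum (fun x : ℕ => q (x + 1) * g (x + 1) * (lam * q x / q (x + 1) - ((x : ℝ) + 1))) s := by
  have hboundary : Tendsto (fun n : ℕ => (n : ℝ) * q n * g n) atTop (nhds 0) := by
    refine (tendsto_add_atTop_iff_nat 1).mp ?_
    have hlim := (hdecay.const_mul lam).sub hu.tendsto_atTop_zero
    rw [mul_zero, sub_zero] at hlim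
    refine hlim.congr fun n => ?_
    field_simp [hq n]
    push_cast
    ring
  rw [hu.hasSum_iff_tendsto_nat, funext (sum_range_stein_telescope hq hg), ← sub_zero s]
  exact hqh.tendsto_sum_nat.sub hboundary

end SteinIdentity

theorem stmt_14_general
    (lam : ℝ) (hlam : 0 < lam)
    (q : ℕ → ℝ)
    (hqpos : ∀ x : ℕ, 0 < q x)
    (hqmass : ∑' x : ℕ, q x = 1)
    (l : ℕ → ℝ)
    (habsq : Summable (fun k : ℕ => |l k * q k|))
    (E : ℝ)
    (f : ℕ → ℝ)
    (hf : ∀ x : ℕ, 1 ≤ x →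
      f x = ((Nat.factorial (x - 1) : ℝ) / lam ^ (x - 1))
        * ∑ k ∈ Finset.range x, (l k - E) * (Real.exp (-lam) * lam ^ k / (Nat.factorial k : ℝ)))
    (habs2 : Summable (fun x : ℕ =>
      q (x + 1) * |f (x + 1) * (lam * q x / q (x + 1) - ((x : ℝ) + 1))|))
    (hdecay : Tendsto (fun n : ℕ => f (n + 1) * q n) atTop (nhds 0)) :
    (∑' k : ℕ, l k * q k) - E
      = ∑' x : ℕ, q (x + 1) * (lam⁻¹ * Real.exp lam * f (x + 1))
          * (lam * q x / q (x + 1) - ((x : ℝ) + 1)) := by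
  set c := lam⁻¹ * Real.exp lam with hc
  have hq : ∀ x, q (x + 1) ≠ 0 := fun x => (hqpos (x + 1)).ne'
  have hg : ∀ x : ℕ, lam * (c * f (x + 1)) - x * (c * f x) = l x - E := by
    intro x
    have hrec := poisson_stein_recursion hlam.ne' hf x
    rw [Real.exp_neg] at hrec
    rw [hc]
    field_simp at hrec ⊢
    linear_combination hrec
  have hqsum : Summable q := by
    by_contra hns
    simp [tsum_eq_zero_of_not_summable hns] at hqmass
  have hqh : HasSum (fun x => q x * (l x - E)) ((∑' k, l k * q k) - E) := by
    have hlq := (summable_abs_iff.mp habsq).hasSum.sub (hqsum.hasSum.mul_left E)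
    rw [hqmass, mul_one] at hlq
    exact hlq.congr_fun fun x => by ring
  have hu : Summable fun x : ℕ =>
      q (x + 1) * (c * f (x + 1)) * (lam * q x / q (x + 1) - ((x : ℝ) + 1)) := by
    have habs : Summable fun x : ℕ => q (x + 1) * (f (x + 1) * (lam * q x / q (x + 1) - (x + 1))) :=
      Summable.of_norm <| habs2.congr fun x => by
        rw [Real.norm_eq_abs, abs_mul (q (x + 1)), abs_of_pos (hqpos (x + 1))]
    exact (habs.mul_left c).congr fun x => by ring
  have hdecay' : Tendsto (fun n => q n * (c * f (n + 1))) atTop (nhds 0) := by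
    have hlim := hdecay.const_mul c
    rw [mul_zero] at hlim
    exact hlim.congr fun n => by ring
  exact ((hasSum_stein_of_recursion (g := fun x => c * f x) hq hg hqh hu hdecay').tsum_eq).symm

theorem stmt_14
    (lam : ℝ) (hlam : 0 < lam)
    (q : ℕ → ℝ)
    (hqpos : ∀ x : ℕ, 0 < q x)
    (hqmass : ∑' x : ℕ, q x = 1)
    (l : ℕ → ℝ)
    (habsp : Summable (fun k : ℕ => |l k * (Real.exp (-lam) * lam ^ k / (Nat.factorial k : ℝ))|))
    (habsq : Summable (fun k : ℕ => |l k * q k|))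
    (E : ℝ) (hE : E = ∑' k : ℕ, l k * (Real.exp (-lam) * lam ^ k / (Nat.factorial k : ℝ)))
    (f : ℕ → ℝ)
    (hf0 : f 0 = 0)
    (hf : ∀ x : ℕ, 1 ≤ x →
      f x = ((Nat.factorial (x - 1) : ℝ) / lam ^ (x - 1))
        * ∑ k ∈ Finset.range x, (l k - E) * (Real.exp (-lam) * lam ^ k / (Nat.factorial k : ℝ)))
    (habs2 : Summable (fun x : ℕ =>
      q (x + 1) * |f (x + 1) * (lam * q x / q (x + 1) - ((x : ℝ) + 1))|))
    (hdecay : Tendsto (fun n : ℕ => f (n + 1) * q n) atTop (nhds 0)) :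
    (∑' k : ℕ, l k * q k) - E
      = ∑' x : ℕ, q (x + 1) * (lam⁻¹ * Real.exp lam * f (x + 1))
          * (lam * q x / q (x + 1) - ((x : ℝ) + 1)) :=
  stmt_14_general lam hlam q hqpos hqmass l habsq E f hf habs2 hdecay
end

section
/- Let n ≥ 1 be an integer and 0 < λ < n, and let q be the Binomial(n, λ/n) density: q(x) = C(n,x)(λ/n)^x (1 − λ/n)^{n−x} for 0 ≤ x ≤ n and q(x) = 0 otherwise. Then the scaled Fisher information of q relative to Po(λ) satisfies K1(Po(λ),q) := λ Σ_{x=0}^n q(x)((x+1)q(x+1)/(λ q(x)) − 1)² = λ²/(n(n−λ)), with the convention q(n+1) := 0. -/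
open Finset Polynomial

/-!
With `p = λ / n`, `q x` is the Bernstein polynomial `bernsteinPolynomial ℝ n x` evaluated at `p`.
The identity `(x + 1) C(n, x + 1) (1 - p) = (n - x) C(n, x) p` makes the score
`(x + 1) q (x + 1) / (λ q x) - 1` equal to `(λ - x) / (n - λ)` for every `x ≤ n`, so the scaled
Fisher information is `λ Var(q) / (n - λ)²`, and the binomial variance is `n p (1 - p) = λ (n - λ) / n`.
-/

namespace bernsteinPolynomial

section CommRing

variable {R : Type*} [CommRing R]

theorem succ_mul_mul_one_sub {n ν : ℕ} (h : ν < n) :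
    ((ν + 1 : ℕ) : R[X]) * bernsteinPolynomial R n (ν + 1) * (1 - X) =
      ((n - ν : ℕ) : R[X]) * X * bernsteinPolynomial R n ν := by
  have hchoose : ((n.choose (ν + 1) * (ν + 1) : ℕ) : R[X]) = ((n.choose ν * (n - ν) : ℕ) : R[X]) :=
    congrArg _ (Nat.choose_succ_right_eq n ν)
  obtain ⟨k, hk⟩ : ∃ k, n - ν = k + 1 := ⟨n - ν - 1, by omega⟩
  have hk' : n - (ν + 1) = k := by omega
  simp only [bernsteinPolynomial, hk, hk', Nat.cast_mul] at hchoose ⊢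
  linear_combination X ^ (ν + 1) * (1 - X) ^ (k + 1) * hchoose

theorem variance_eval (n : ℕ) (p : R) :
    ∑ ν ∈ range (n + 1), (n * p - ν) ^ 2 * (bernsteinPolynomial R n ν).eval p =
      n * p * (1 - p) := by
  simpa [eval_finsetSum] using congrArg (eval p) (variance (R := R) n)

end CommRing

section Field

variable {K : Type*} [Field K] [CharZero K]

theorem eval_ne_zero {n ν : ℕ} (h : ν ≤ n) {p : K} (hp0 : p ≠ 0) (hp1 : p ≠ 1) :
    (bernsteinPolynomial K n ν).eval p ≠ 0 := by
  have hchoose : (n.choose ν : K) ≠ 0 := Nat.cast_ne_zero.mpr (Nat.choose_pos h).ne'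
  have hp1' : 1 - p ≠ 0 := sub_ne_zero.mpr hp1.symm
  simp only [bernsteinPolynomial, eval_mul, eval_pow, eval_sub, eval_one, eval_X, eval_natCast]
  exact mul_ne_zero (mul_ne_zero hchoose (pow_ne_zero _ hp0)) (pow_ne_zero _ hp1')

/-- The score of `Bin(n, p)` relative to `Po(n p)`. At `ν = n` it holds because
`bernsteinPolynomial K n (n + 1) = 0`, matching the convention `q (n + 1) = 0`. -/
theorem succ_mul_eval_succ_div_sub_one {n ν : ℕ} (hn : n ≠ 0) (h : ν ≤ n) {p : K}
    (hp0 : p ≠ 0) (hp1 : p ≠ 1) :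
    ((ν : K) + 1) * (bernsteinPolynomial K n (ν + 1)).eval p /
        (n * p * (bernsteinPolynomial K n ν).eval p) - 1 =
      (n * p - ν) / (n * (1 - p)) := by
  have hn' : (n : K) ≠ 0 := Nat.cast_ne_zero.mpr hn
  have hp1' : 1 - p ≠ 0 := sub_ne_zero.mpr hp1.symm
  have hB := eval_ne_zero h hp0 hp1
  rcases h.lt_or_eq with hlt | rfl
  · have hrec := congrArg (eval p) (succ_mul_mul_one_sub (R := K) hlt)
    simp only [eval_mul, eval_sub, eval_add, eval_one, eval_X, eval_natCast, Nat.cast_sub hlt.le,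
      Nat.cast_add_one] at hrec
    field_simp
    linear_combination hrec
  · rw [eq_zero_of_lt K (Nat.lt_succ_self ν), eval_zero]
    field_simp
    ring

end Field

end bernsteinPolynomial

open bernsteinPolynomial in
theorem stmt_17_general
    (n : ℕ) (lam : ℝ) (hlam : 0 < lam) (hlamn : lam < n)
    (q : ℕ → ℝ)
    (hq : ∀ x : ℕ, q x = (n.choose x : ℝ) * (lam / n) ^ x * (1 - lam / n) ^ (n - x)) :
    lam * ∑ x ∈ Finset.range (n + 1),
        q x * (((x : ℝ) + 1) * q (x + 1) / (lam * q x) - 1) ^ 2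
      = lam ^ 2 / (n * (n - lam)) := by
  set p := lam / n with hp
  have hn0 : (n : ℝ) ≠ 0 := (hlam.trans hlamn).ne'
  have hlam_eq : lam = n * p := by rw [hp, mul_div_cancel₀ _ hn0]
  have hp0 : p ≠ 0 := by positivity
  have hp1 : p ≠ 1 := by rw [hp, ne_eq, div_eq_one_iff_eq hn0]; exact hlamn.ne
  have hqB : ∀ x, q x = (bernsteinPolynomial ℝ n x).eval p := fun x => by
    simp [hq, bernsteinPolynomial]
  calc lam * ∑ x ∈ range (n + 1), q x * (((x : ℝ) + 1) * q (x + 1) / (lam * q x) - 1) ^ 2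
      = lam * (∑ x ∈ range (n + 1), (n * p - x) ^ 2 * (bernsteinPolynomial ℝ n x).eval p) /
          (n * (1 - p)) ^ 2 := by
        rw [mul_div_assoc, sum_div]
        refine congrArg _ (sum_congr rfl fun x hx => ?_)
        rw [hqB, hqB, hlam_eq, succ_mul_eval_succ_div_sub_one (by exact_mod_cast hn0)
          (Nat.lt_succ_iff.mp (mem_range.mp hx)) hp0 hp1, div_pow]
        ring
    _ = lam ^ 2 / (n * (n - lam)) := by
        rw [variance_eval, hlam_eq]
        have hp1' : 1 - p ≠ 0 := sub_ne_zero.mpr hp1.symm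
        field_simp

theorem stmt_17
    (n : ℕ) (hn : 1 ≤ n) (lam : ℝ) (hlam : 0 < lam) (hlamn : lam < n)
    (q : ℕ → ℝ)
    (hq : ∀ x : ℕ, q x = (n.choose x : ℝ) * (lam / n) ^ x * (1 - lam / n) ^ (n - x)) :
    lam * ∑ x ∈ Finset.range (n + 1),
        q x * (((x : ℝ) + 1) * q (x + 1) / (lam * q x) - 1) ^ 2
      = lam ^ 2 / (n * (n - lam)) :=
  stmt_17_general n lam hlam hlamn q hq
end

section
/- Let 0 < q₀ < 1 and let P be the geometric density P(x) = (1−q₀)^x q₀ for x ∈ ℕ = {0,1,2,…}, with mean e₀ := (1−q₀)/q₀ > 0. Then the scaled Fisher information of P relative to Po(e₀) satisfies K1(Po(e₀),P) := e₀ Σ_{x≥0} P(x)((x+1)P(x+1)/(e₀ P(x)) − 1)² = (1−q₀)²/q₀. -/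
/-! Since `(x + 1) P(x + 1) / (e₀ P(x)) = (x + 1) q₀`, the sum is `q₀²` times the variance of the
shifted geometric variable `X + 1`, whose mean is `1 / q₀` and whose variance is `(1 - q₀) / q₀²`.
The two moments come from the series `∑ (n + 1) rⁿ = 1 / (1 - r)²` and
`∑ (n + 1)² rⁿ = (1 + r) / (1 - r)³`. -/

section GeometricMoments

variable {𝕜 : Type*} [NormedField 𝕜] {q r : 𝕜}

theorem hasSum_succ_mul_geometric_of_norm_lt_one (hr : ‖r‖ < 1) :
    HasSum (fun n : ℕ ↦ ((n : 𝕜) + 1) * r ^ n) (1 / (1 - r) ^ 2) := by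
  simpa using hasSum_choose_mul_geometric_of_norm_lt_one 1 hr

theorem hasSum_succ_sq_mul_geometric_of_norm_lt_one (hr : ‖r‖ < 1) :
    HasSum (fun n : ℕ ↦ ((n : 𝕜) + 1) ^ 2 * r ^ n) ((1 + r) / (1 - r) ^ 3) := by
  have hr1 : 1 - r ≠ 0 := sub_ne_zero.2 fun h ↦ by simp [← h] at hr
  -- `(n + 1)² = 2 * (n + 2).choose 2 - (n + 1)`
  convert! ((hasSum_choose_mul_geometric_of_norm_lt_one 2 hr).mul_left 2).sub
    (hasSum_succ_mul_geometric_of_norm_lt_one hr) using 1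
  · funext n
    have h : (n + 2) * (n + 1) = (n + 2).choose 2 * 2 := by
      simpa using Nat.add_one_mul_choose_eq (n + 1) 1
    replace h := congrArg (Nat.cast : ℕ → 𝕜) h
    push_cast at h
    linear_combination (r ^ n) * h
  · field_simp
    ring

theorem hasSum_geometric_mul_succ_mul_sub_one_sq (hq : ‖1 - q‖ < 1) :
    HasSum (fun n : ℕ ↦ (1 - q) ^ n * q * (((n : 𝕜) + 1) * q - 1) ^ 2) (1 - q) := by
  have hq0 : q ≠ 0 := by rintro rfl; simp at hq
  have hsum := (((hasSum_succ_sq_mul_geometric_of_norm_lt_one hq).mul_left (q ^ 3)).sub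
    ((hasSum_succ_mul_geometric_of_norm_lt_one hq).mul_left (2 * q ^ 2))).add
    ((hasSum_geometric_of_norm_lt_one hq).mul_left q)
  rw [sub_sub_cancel] at hsum
  convert! hsum using 1
  · funext n
    ring
  · field_simp
    ring

end GeometricMoments

theorem stmt_18
    (q0 : ℝ) (h0 : 0 < q0) (h1 : q0 < 1)
    (P : ℕ → ℝ) (hP : ∀ x : ℕ, P x = (1 - q0) ^ x * q0)
    (e0 : ℝ) (he0 : e0 = (1 - q0) / q0) :
    e0 * ∑' x : ℕ, P x * (((x : ℝ) + 1) * P (x + 1) / (e0 * P x) - 1) ^ 2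
      = (1 - q0) ^ 2 / q0 := by
  have hr0 : 0 < 1 - q0 := by linarith
  have hr : ‖1 - q0‖ < 1 := by rw [Real.norm_of_nonneg hr0.le]; linarith
  have hratio (x : ℕ) : ((x : ℝ) + 1) * P (x + 1) / (e0 * P x) = ((x : ℝ) + 1) * q0 := by
    rw [hP, hP, he0, pow_succ]
    field_simp
  simp_rw [hratio, hP]
  rw [(hasSum_geometric_mul_succ_mul_sub_one_sq hr).tsum_eq, he0]
  field_simp
end
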